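/- arXiv:1205.2052 — 12 statements merged into one kernel-verified Lean document; each statement's English description precedes it below -/
import Mathlib

section
/- Let P* be positive and let v be a nonzero vector in the cone Q^n_B(P,P*) of possible velocities at a point P ≠ P* (i.e., v is the right-hand side of some master equation with nonnegative rates and equilibrium P*, evaluated at P). Then −v is not in Q^n_B(P,P*). Consequently the cone Q^n_B(P,P*) contains no whole straight line. -/
/-!
Write `x i = p i / p* i`. Along any velocity `v` of Markov kinetics with equilibrium `P*`,
the balance condition turns `∑ i, x i * v i` (half the derivative of `H₂(P‖P*)` in direction
`v`) into minus half a sum of squares `q i j * p* j * (x j - x i) ^ 2`. Hence this pairing is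
`≤ 0` on the whole cone, and it vanishes only when every flux `q i j * p* j * (x j - x i)`
vanishes, i.e. when `v = 0`. If both `v` and `-v` lay in the cone, the pairing would be `0`.
-/

open Finset

/-- The cone `Q^n_B(P,P*)` of possible velocities at `P` of Markov kinetics
with positive equilibrium `P*`. -/
def velocityConeB (n : ℕ) (pstar p : Fin n → ℝ) : Set (Fin n → ℝ) :=
  {v | ∃ q : Fin n → Fin n → ℝ,
    (∀ i j, i ≠ j → 0 ≤ q i j) ∧
    (∀ i, ∑ j ∈ Finset.univ.filter (· ≠ i), q i j * pstar j =
      (∑ j ∈ Finset.univ.filter (· ≠ i), q j i) * pstar i) ∧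
    (∀ i, v i = ∑ j ∈ Finset.univ.filter (· ≠ i),
      q i j * pstar j * (p j / pstar j - p i / pstar i))}

section MasterEquation

variable {ι : Type*} [Fintype ι] [DecidableEq ι]

/-- Right-hand side of the master equation with rates `q` and equilibrium `w`, at the point
whose ratios to the equilibrium are `x`. -/
def masterVelocity (q : ι → ι → ℝ) (w x : ι → ℝ) (i : ι) : ℝ :=
  ∑ j ∈ univ.filter (· ≠ i), q i j * w j * (x j - x i)

def dissipation (q : ι → ι → ℝ) (w x : ι → ℝ) : ℝ :=
  ∑ i, ∑ j ∈ univ.filter (· ≠ i), q i j * w j * (x j - x i) ^ 2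

def IsBalanced (q : ι → ι → ℝ) (w : ι → ℝ) : Prop :=
  ∀ i, ∑ j ∈ univ.filter (· ≠ i), q i j * w j = (∑ j ∈ univ.filter (· ≠ i), q j i) * w i

theorem sum_sum_filter_ne_comm (g : ι → ι → ℝ) :
    ∑ i, ∑ j ∈ univ.filter (· ≠ i), g i j = ∑ i, ∑ j ∈ univ.filter (· ≠ i), g j i := by
  simp only [sum_filter]
  rw [sum_comm]
  simp only [ne_comm]

variable {q : ι → ι → ℝ} {w : ι → ℝ}

theorem two_mul_sum_mul_masterVelocity (hbal : IsBalanced q w) (x : ι → ℝ) :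
    2 * ∑ i, x i * masterVelocity q w x i = -dissipation q w x := by
  -- `2 x i (x j - x i) + (x j - x i) ^ 2 = x j ^ 2 - x i ^ 2`, and by balance the
  -- `x i ^ 2` terms cancel the `x j ^ 2` terms after swapping `i` and `j`.
  have hexpand : 2 * ∑ i, x i * masterVelocity q w x i + dissipation q w x
      = ∑ i, ∑ j ∈ univ.filter (· ≠ i), q i j * w j * (x j ^ 2 - x i ^ 2) := by
    simp only [masterVelocity, dissipation, mul_sum, ← sum_add_distrib]
    refine sum_congr rfl fun i _ => sum_congr rfl fun j _ => ?_
    ring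
  have hcancel : ∑ i, ∑ j ∈ univ.filter (· ≠ i), q i j * w j * (x j ^ 2 - x i ^ 2) = 0 := by
    have hrow : ∀ i, ∑ j ∈ univ.filter (· ≠ i), q i j * w j * (x j ^ 2 - x i ^ 2)
        = ∑ j ∈ univ.filter (· ≠ i), q i j * w j * x j ^ 2
          - ∑ j ∈ univ.filter (· ≠ i), q j i * w i * x i ^ 2 := by
      intro i
      have hout : ∑ j ∈ univ.filter (· ≠ i), q j i * w i * x i ^ 2
          = (∑ j ∈ univ.filter (· ≠ i), q i j * w j) * x i ^ 2 := by
        rw [hbal i, sum_mul, sum_mul]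
      rw [hout, sum_mul, ← sum_sub_distrib]
      refine sum_congr rfl fun j _ => ?_
      ring
    simp only [hrow, sum_sub_distrib, sum_sum_filter_ne_comm fun i j => q i j * w j * x j ^ 2,
      sub_self]
  linarith

theorem dissipation_term_nonneg (hq : ∀ i j, i ≠ j → 0 ≤ q i j) (hw : ∀ i, 0 ≤ w i)
    (x : ι → ℝ) {i j : ι} (hj : j ∈ univ.filter (· ≠ i)) :
    0 ≤ q i j * w j * (x j - x i) ^ 2 :=
  mul_nonneg (mul_nonneg (hq i j (mem_filter.1 hj).2.symm) (hw j)) (sq_nonneg _)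

theorem sum_mul_masterVelocity_nonpos (hq : ∀ i j, i ≠ j → 0 ≤ q i j) (hw : ∀ i, 0 ≤ w i)
    (hbal : IsBalanced q w) (x : ι → ℝ) :
    ∑ i, x i * masterVelocity q w x i ≤ 0 := by
  have hD : 0 ≤ dissipation q w x :=
    sum_nonneg fun i _ => sum_nonneg fun j => dissipation_term_nonneg hq hw x
  linarith [two_mul_sum_mul_masterVelocity hbal x]

theorem masterVelocity_eq_zero_of_sum_mul_eq_zero (hq : ∀ i j, i ≠ j → 0 ≤ q i j)
    (hw : ∀ i, 0 ≤ w i) (hbal : IsBalanced q w) {x : ι → ℝ}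
    (h : ∑ i, x i * masterVelocity q w x i = 0) :
    masterVelocity q w x = 0 := by
  have hD : dissipation q w x = 0 := by linarith [two_mul_sum_mul_masterVelocity hbal x]
  have hrow := (sum_eq_zero_iff_of_nonneg fun i _ =>
    sum_nonneg fun j => dissipation_term_nonneg hq hw x).1 hD
  funext i
  refine sum_eq_zero fun j hj => ?_
  have hterm := (sum_eq_zero_iff_of_nonneg fun j => dissipation_term_nonneg hq hw x).1
    (hrow i (mem_univ i)) j hj
  rcases mul_eq_zero.1 hterm with hflux | hdiff
  · rw [hflux, zero_mul]
  · rw [pow_eq_zero_iff two_ne_zero |>.1 hdiff, mul_zero]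

end MasterEquation

/-- The cone of possible velocities contains no straight line: if `v ≠ 0`
belongs to it, then `−v` does not. -/
theorem velocityConeB_no_line (n : ℕ) (pstar p : Fin n → ℝ)
    (hpos : ∀ i, 0 < pstar i) (v : Fin n → ℝ) (hv : v ≠ 0)
    (hmem : v ∈ velocityConeB n pstar p) :
    -v ∉ velocityConeB n pstar p := by
  intro hneg
  obtain ⟨q, hq, hbal, hv_eq⟩ := hmem
  obtain ⟨q', hq', hbal', hneg_eq⟩ := hneg
  set x : Fin n → ℝ := fun i => p i / pstar i
  have hw : ∀ i, 0 ≤ pstar i := fun i => (hpos i).le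
  obtain rfl : v = masterVelocity q pstar x := funext hv_eq
  replace hneg_eq : -masterVelocity q pstar x = masterVelocity q' pstar x := funext hneg_eq
  have hle := sum_mul_masterVelocity_nonpos hq hw hbal x
  have hge := sum_mul_masterVelocity_nonpos hq' hw hbal' x
  simp only [← hneg_eq, Pi.neg_apply, mul_neg, sum_neg_distrib, neg_nonpos] at hge
  exact hv (masterVelocity_eq_zero_of_sum_mul_eq_zero hq hw hbal (le_antisymm hle hge))
end

section
/- For a nonzero velocity vector v in the cone of possible velocities of Markov kinetics with positive equilibrium P* at a point P, the directional derivative of the quadratic divergence H_2(P‖P*) = ∑_i (p_i−p*_i)²/p*_i along v at P is strictly negative. Explicitly: if v_i = ∑_{j≠i} q_{ij} p*_j (p_j/p*_j − p_i/p*_i) with q_{ij} ≥ 0 and v ≠ 0, then ∑_i 2(p_i−p*_i)/p*_i · v_i = −∑_{i≠j} q_{ij} p*_j (p_i/p*_i − p_j/p*_j)² < 0. -/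
open Finset

/-- For a nonzero velocity of a Markov system with positive equilibrium `P*`,
the directional derivative of the quadratic divergence `H₂` along it is
strictly negative. -/
theorem directional_derivative_H2_neg (n : ℕ) (q : Fin n → Fin n → ℝ)
    (pstar : Fin n → ℝ) (hpos : ∀ i, 0 < pstar i)
    (hq : ∀ i j, i ≠ j → 0 ≤ q i j)
    (hbal : ∀ i, ∑ j ∈ Finset.univ.filter (· ≠ i), q i j * pstar j =
      (∑ j ∈ Finset.univ.filter (· ≠ i), q j i) * pstar i)
    (p v : Fin n → ℝ)
    (hv : ∀ i, v i = ∑ j ∈ Finset.univ.filter (· ≠ i),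
      q i j * pstar j * (p j / pstar j - p i / pstar i))
    (hvne : v ≠ 0) :
    (∑ i, 2 * (p i - pstar i) / pstar i * v i =
      -∑ i, ∑ j ∈ Finset.univ.filter (· ≠ i),
        q i j * pstar j * (p i / pstar i - p j / pstar j) ^ 2) ∧
    (∑ i, 2 * (p i - pstar i) / pstar i * v i < 0) := by
  have hps : ∀ i, pstar i ≠ 0 := fun i => (hpos i).ne'
  set x : Fin n → ℝ := fun i => p i / pstar i with hxdef
  -- swap lemma
  have swap : ∀ f : Fin n → ℝ,
      ∑ i, ∑ j ∈ Finset.univ.filter (· ≠ i), q i j * pstar j * f j =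
      ∑ i, ∑ j ∈ Finset.univ.filter (· ≠ i), q i j * pstar j * f i := by
    intro f
    have h1 : ∑ i, ∑ j ∈ Finset.univ.filter (· ≠ i), q i j * pstar j * f j =
        ∑ j, ∑ i ∈ Finset.univ.filter (· ≠ j), q i j * pstar j * f j := by
      rw [Finset.sum_comm' (s' := fun j => Finset.univ.filter (· ≠ j))
        (t' := Finset.univ)]
      intro i j
      simp [ne_comm, eq_comm, and_comm]
    rw [h1]
    refine Finset.sum_congr rfl fun j _ => ?_
    have : ∑ i ∈ Finset.univ.filter (· ≠ j), q i j * pstar j * f j =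
        (∑ i ∈ Finset.univ.filter (· ≠ j), q i j) * pstar j * f j := by
      rw [Finset.sum_mul, Finset.sum_mul]
    rw [this]
    have hb := hbal j
    rw [show (∑ i ∈ Finset.univ.filter (· ≠ j), q i j) * pstar j * f j
        = ((∑ i ∈ Finset.univ.filter (· ≠ j), q i j) * pstar j) * f j by ring,
      ← hb, Finset.sum_mul]
  -- abbreviations
  set S : ℝ := ∑ i, 2 * (p i - pstar i) / pstar i * v i with hS
  set T : ℝ := ∑ i, ∑ j ∈ Finset.univ.filter (· ≠ i),
      q i j * pstar j * (x i - x j) ^ 2 with hT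
  have hSform : S = ∑ i, ∑ j ∈ Finset.univ.filter (· ≠ i),
      2 * (x i - 1) * (q i j * pstar j * (x j - x i)) := by
    rw [hS]
    refine Finset.sum_congr rfl fun i _ => ?_
    rw [hv i, Finset.mul_sum]
    have hc : 2 * (p i - pstar i) / pstar i = 2 * (x i - 1) := by
      simp only [hxdef]
      rw [mul_div_assoc, sub_div, div_self (hps i)]
    rw [hc]
  have hST : S + T = 0 := by
    have key : S + T =
        (∑ i, ∑ j ∈ Finset.univ.filter (· ≠ i),
          q i j * pstar j * ((x j) ^ 2 - 2 * x j)) -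
        (∑ i, ∑ j ∈ Finset.univ.filter (· ≠ i),
          q i j * pstar j * ((x i) ^ 2 - 2 * x i)) := by
      rw [hSform, hT, ← Finset.sum_add_distrib, ← Finset.sum_sub_distrib]
      refine Finset.sum_congr rfl fun i _ => ?_
      rw [← Finset.sum_add_distrib, ← Finset.sum_sub_distrib]
      refine Finset.sum_congr rfl fun j _ => ?_
      ring
    rw [key, swap (fun i => (x i) ^ 2 - 2 * x i), sub_self]
  have hSeq : S = -T := by linarith
  have hTnonneg : ∀ i ∈ Finset.univ (α := Fin n),
      0 ≤ ∑ j ∈ Finset.univ.filter (· ≠ i), q i j * pstar j * (x i - x j) ^ 2 := by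
    intro i _
    refine Finset.sum_nonneg fun j hj => ?_
    have hij : j ≠ i := (Finset.mem_filter.mp hj).2
    exact mul_nonneg (mul_nonneg (hq i j hij.symm) (hpos j).le) (sq_nonneg _)
  have hT0 : 0 ≤ T := Finset.sum_nonneg hTnonneg
  have hTne : T ≠ 0 := by
    intro h0
    apply hvne
    funext i
    have hi : ∑ j ∈ Finset.univ.filter (· ≠ i), q i j * pstar j * (x i - x j) ^ 2 = 0 :=
      (Finset.sum_eq_zero_iff_of_nonneg hTnonneg).mp h0 i (Finset.mem_univ i)
    have hterm : ∀ j ∈ Finset.univ.filter (· ≠ i),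
        q i j * pstar j * (x i - x j) ^ 2 = 0 := by
      intro j hj
      refine (Finset.sum_eq_zero_iff_of_nonneg fun j hj => ?_).mp hi j hj
      have hij : j ≠ i := (Finset.mem_filter.mp hj).2
      exact mul_nonneg (mul_nonneg (hq i j hij.symm) (hpos j).le) (sq_nonneg _)
    rw [hv i]
    show (∑ j ∈ Finset.univ.filter (· ≠ i),
      q i j * pstar j * (p j / pstar j - p i / pstar i)) = 0
    refine Finset.sum_eq_zero fun j hj => ?_
    have h := hterm j hj
    have hxx : p j / pstar j - p i / pstar i = x j - x i := rfl
    rw [hxx]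
    rcases mul_eq_zero.mp h with h1 | h2
    · rcases mul_eq_zero.mp h1 with hq0 | hp0
      · rw [hq0]; ring
      · exact absurd hp0 (hps j)
    · have : x i - x j = 0 := by
        have := sq_eq_zero_iff.mp h2
        exact this
      have : x j - x i = 0 := by linarith
      rw [this]; ring
  have hTpos : 0 < T := lt_of_le_of_ne hT0 (Ne.symm hTne)
  constructor
  · rw [hSeq, hT]
  · rw [hSeq]; linarith
end

section
/- Let (q_{ij}) be nonnegative rates on n states admitting a strictly positive equilibrium P*. Then for every state A_i, either q_{ji} = q_{ij} = 0 for all j, or A_i belongs to a directed cycle of transitions all of whose rate constants are strictly positive. -/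
/-!
If state `i` has a positive transition `i → j`, let `S` be the set of states reachable from `i`
in at least one step. No positive transition leaves `S`. Summing the balance equations over `S`,
the flows between states of `S` cancel, so the total probability flow into `S` equals the flow
out of `S`, which is zero; hence no positive transition enters `S` either. As `i → j` enters `S`
unless `i ∈ S`, the state `i` lies on a closed walk, which shortens to a simple cycle. If `i` has
no outgoing transition, the same argument for `S = {i}` shows that none enters `i`.
-/

open Finset

namespace Relation

variable {α : Type*} {r : α → α → Prop}

theorem ReflTransGen.exists_nodup_isChain [DecidableEq α] {a b : α} (h : ReflTransGen r a b) :
    ∃ l : List α, (a :: l).Nodup ∧ (a :: l).IsChain r ∧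
      (a :: l).getLast (List.cons_ne_nil _ _) = b := by
  induction h using ReflTransGen.head_induction_on with
  | refl => exact ⟨[], List.nodup_singleton _, List.isChain_singleton _, rfl⟩
  | @head a c hac _ ih =>
    obtain ⟨l, hnd, hch, hlast⟩ := ih
    by_cases ha : a ∈ c :: l
    · -- a path that revisits `a` is cut back to its last visit
      obtain ⟨s, t, hst⟩ := List.append_of_mem ha
      have hsuffix : a :: t <:+ c :: l := hst ▸ List.suffix_append s (a :: t)
      refine ⟨t, hnd.sublist hsuffix.sublist, hch.suffix hsuffix, ?_⟩
      rw [← hlast]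
      simp only [hst, List.getLast_append_of_ne_nil _ (List.cons_ne_nil a t)]
    · exact ⟨c :: l, List.nodup_cons.2 ⟨ha, hnd⟩, hch.cons_cons hac,
        (List.getLast_cons _).trans hlast⟩

theorem TransGen.exists_injective_cycle [DecidableEq α] (hr : ∀ x, ¬ r x x) {a : α}
    (h : TransGen r a a) :
    ∃ (k : ℕ) (f : Fin (k + 2) → α), Function.Injective f ∧ f 0 = a ∧
      ∀ m, r (f m) (f (m + 1)) := by
  obtain ⟨c, hac, hca⟩ := TransGen.tail'_iff.1 h
  obtain ⟨l, hnd, hch, hlast⟩ := hac.exists_nodup_isChain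
  obtain ⟨k, hk⟩ : ∃ k, l.length = k + 1 := by
    refine Nat.exists_eq_add_one.2 (List.length_pos_iff.2 ?_)
    rintro rfl
    rw [List.getLast_singleton] at hlast
    exact hr a (hlast ▸ hca)
  have hlen : (a :: l).length = k + 2 := by simp [hk]
  refine ⟨k, fun m => (a :: l).get (m.cast hlen.symm),
    (List.nodup_iff_injective_get.1 hnd).comp (Fin.cast_injective _), rfl, ?_⟩
  refine Fin.lastCases ?_ fun t => ?_
  · have hc : (a :: l)[k + 1] = c := by
      rw [← hlast, List.getLast_eq_getElem]
      simp only [hlen, Nat.add_one_sub_one]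
    simp only [Fin.last_add_one, List.get_eq_getElem, Fin.val_cast, Fin.val_last, Fin.val_zero,
      List.getElem_cons_zero, hc]
    exact hca
  · rw [Fin.coeSucc_eq_succ]
    exact List.isChain_iff_getElem.1 hch t (by rw [hlen]; omega)

end Relation

-- `w x y` is the flow from `y` into `x`.
theorem Finset.inflow_eq_zero_of_outflow_eq_zero {ι M : Type*} [Fintype ι] [DecidableEq ι]
    [AddCommGroup M] [PartialOrder M] [IsOrderedAddMonoid M] {w : ι → ι → M}
    (hbal : ∀ x, ∑ y, w x y = ∑ y, w y x) {S : Finset ι}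
    (hnn : ∀ x ∈ S, ∀ y ∉ S, 0 ≤ w x y) (hout : ∀ x ∈ S, ∀ y ∉ S, w y x = 0) :
    ∀ x ∈ S, ∀ y ∉ S, w x y = 0 := by
  have htotal : ∑ x ∈ S, ∑ y, w x y = ∑ x ∈ S, ∑ y, w y x := sum_congr rfl fun x _ => hbal x
  simp only [← sum_add_sum_compl S, sum_add_distrib] at htotal
  have hinternal : ∑ x ∈ S, ∑ y ∈ S, w x y = ∑ x ∈ S, ∑ y ∈ S, w y x := sum_comm
  have hzero : ∑ x ∈ S, ∑ y ∈ Sᶜ, w y x = 0 :=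
    sum_eq_zero fun x hx => sum_eq_zero fun y hy => hout x hx y (mem_compl.1 hy)
  rw [hinternal, hzero, add_zero, add_eq_left] at htotal
  intro x hx y hy
  have hnn' : ∀ x ∈ S, ∀ y ∈ Sᶜ, 0 ≤ w x y := fun x hx y hy => hnn x hx y (mem_compl.1 hy)
  rw [sum_eq_zero_iff_of_nonneg fun x hx => sum_nonneg (hnn' x hx)] at htotal
  exact (sum_eq_zero_iff_of_nonneg (hnn' x hx)).1 (htotal x hx) y (mem_compl.2 hy)

section MarkovChain

variable {ι : Type*} [Fintype ι] [DecidableEq ι] {q : ι → ι → ℝ} {p : ι → ℝ}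

theorem sum_rate_mul_eq_sum_rate_mul_of_balance
    (hbal : ∀ i, ∑ j ∈ univ.filter (· ≠ i), q i j * p j =
      (∑ j ∈ univ.filter (· ≠ i), q j i) * p i) (i : ι) :
    ∑ j, q i j * p j = ∑ j, q j i * p i := by
  rw [← add_sum_erase _ _ (mem_univ i), ← add_sum_erase _ _ (mem_univ i), ← filter_ne', hbal,
    sum_mul]

theorem rate_into_eq_zero_of_rate_out_eq_zero (hpos : ∀ i, 0 < p i)
    (hq : ∀ i j, i ≠ j → 0 ≤ q i j)
    (hbal : ∀ i, ∑ j ∈ univ.filter (· ≠ i), q i j * p j =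
      (∑ j ∈ univ.filter (· ≠ i), q j i) * p i)
    {S : Finset ι} (hout : ∀ x ∈ S, ∀ y ∉ S, q y x = 0) :
    ∀ x ∈ S, ∀ y ∉ S, q x y = 0 := by
  have hne : ∀ x ∈ S, ∀ y ∉ S, x ≠ y := fun x hx y hy h => hy (h ▸ hx)
  intro x hx y hy
  have hflow := inflow_eq_zero_of_outflow_eq_zero (w := fun x y => q x y * p y)
    (sum_rate_mul_eq_sum_rate_mul_of_balance hbal)
    (fun x hx y hy => mul_nonneg (hq x y (hne x hx y hy)) (hpos y).le)
    (fun x hx y hy => by rw [hout x hx y hy, zero_mul]) x hx y hy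
  exact (mul_eq_zero.1 hflow).resolve_right (hpos y).ne'

end MarkovChain

/-- If a Markov chain has a strictly positive equilibrium then every state
either is disconnected (all its rate constants vanish) or belongs to a
directed cycle with strictly positive rate constants. -/
theorem state_in_positive_cycle (n : ℕ) (q : Fin n → Fin n → ℝ)
    (pstar : Fin n → ℝ) (hpos : ∀ i, 0 < pstar i)
    (hq : ∀ i j, i ≠ j → 0 ≤ q i j)
    (hbal : ∀ i, ∑ j ∈ Finset.univ.filter (· ≠ i), q i j * pstar j =
      (∑ j ∈ Finset.univ.filter (· ≠ i), q j i) * pstar i) :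
    ∀ i : Fin n,
      (∀ j, j ≠ i → q i j = 0 ∧ q j i = 0) ∨
      (∃ (k : ℕ) (f : Fin (k + 2) → Fin n), Function.Injective f ∧ f 0 = i ∧
        ∀ m : Fin (k + 2), 0 < q (f (m + 1)) (f m)) := by
  classical
  intro i
  let E : Fin n → Fin n → Prop := fun x y => x ≠ y ∧ 0 < q y x
  have hE : ∀ x y, x ≠ y → ¬ E x y → q y x = 0 := fun x y hxy h =>
    le_antisymm (not_lt.1 fun h' => h ⟨hxy, h'⟩) (hq y x hxy.symm)
  by_cases hexit : ∃ j, E i j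
  · right
    obtain ⟨j, hij, hqji⟩ := hexit
    let S := univ.filter (Relation.TransGen E i)
    have hj : j ∈ S := mem_filter.2 ⟨mem_univ j, Relation.TransGen.single ⟨hij, hqji⟩⟩
    have hi : i ∈ S := by
      by_contra hi
      refine hqji.ne' (rate_into_eq_zero_of_rate_out_eq_zero hpos hq hbal ?_ j hj i hi)
      intro x hx y hy
      exact hE x y (fun h => hy (h ▸ hx))
        fun hxy => hy (mem_filter.2 ⟨mem_univ y, (mem_filter.1 hx).2.tail hxy⟩)
    obtain ⟨k, f, hinj, hf0, hcyc⟩ :=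
      Relation.TransGen.exists_injective_cycle (fun x h => h.1 rfl) (mem_filter.1 hi).2
    exact ⟨k, f, hinj, hf0, fun m => (hcyc m).2⟩
  · left
    rw [not_exists] at hexit
    have hin := rate_into_eq_zero_of_rate_out_eq_zero hpos hq hbal (S := {i}) fun x hx y hy => by
      obtain rfl := mem_singleton.1 hx
      exact hE x y (fun h => hy (h ▸ hx)) (hexit y)
    intro j hji
    exact ⟨hin i (mem_singleton_self i) j (notMem_singleton.2 hji),
      hE i j hji.symm (hexit j)⟩
end

section
/- Let Q (rates q_{ij} ≥ 0, not all zero) lie on an extreme ray of the cone Q^n_B(P*) of Markov chains with positive equilibrium P*. Then Q is a simple cycle with rate constants q_{i_{j+1} i_j} = κ/p*_{i_j} for some κ > 0, i.e. every extreme ray of Q^n_B(P*) is generated by a simple cycle with constants κ/p*_{i_j}. -/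
open Finset

/-- The cone `Q^n_B(P*)` of all Markov chains (rate matrices, zero diagonal)
with the given positive equilibrium `P*`. -/
def rateConeB (n : ℕ) (pstar : Fin n → ℝ) : Set (Fin n → Fin n → ℝ) :=
  {q | (∀ i, q i i = 0) ∧ (∀ i j, i ≠ j → 0 ≤ q i j) ∧
    (∀ i, ∑ j ∈ Finset.univ.filter (· ≠ i), q i j * pstar j =
      (∑ j ∈ Finset.univ.filter (· ≠ i), q j i) * pstar i)}

/-- Every extreme ray of the cone of Markov chains with positive equilibrium
`P*` is generated by a simple cycle with rate constants `κ/p*_{i_j}`. -/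
theorem extreme_ray_is_simple_cycle (n : ℕ) (pstar : Fin n → ℝ)
    (hpos : ∀ i, 0 < pstar i) (Q : Fin n → Fin n → ℝ)
    (hQ : Q ∈ rateConeB n pstar) (hQne : Q ≠ 0)
    (hext : ∀ lam : ℝ, 0 ≤ lam → ∀ x ∈ rateConeB n pstar,
      ∀ y ∈ rateConeB n pstar, lam • Q = (1 / 2 : ℝ) • (x + y) →
      (∃ a : ℝ, 0 ≤ a ∧ x = a • Q) ∧ (∃ b : ℝ, 0 ≤ b ∧ y = b • Q)) :
    ∃ (k : ℕ) (f : Fin (k + 2) → Fin n) (κ : ℝ), Function.Injective f ∧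
      0 < κ ∧ ∀ a b, Q a b =
        ∑ m : Fin (k + 2), if f (m + 1) = a ∧ f m = b then κ / pstar b else 0 := by
  classical
  obtain ⟨hdiag, hnn, hbal⟩ := hQ
  -- there is a positive entry
  have hex0 : ∃ a b, 0 < Q a b := by
    by_contra h
    push_neg at h
    apply hQne
    funext u v
    simp only [Pi.zero_apply]
    rcases eq_or_ne u v with rfl | huv
    · exact hdiag u
    · exact le_antisymm (h u v) (hnn u v huv)
  obtain ⟨a0, b0, hab⟩ := hex0
  -- flow conservation step
  have step : ∀ v c : Fin n, 0 < Q c v → ∃ d, 0 < Q d c := by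
    intro v c hvc
    have hvne : v ≠ c := by
      rintro rfl
      simp [hdiag] at hvc
    have hin : 0 < ∑ j ∈ Finset.univ.filter (· ≠ c), Q c j * pstar j := by
      refine Finset.sum_pos' (fun j hj => ?_) ⟨v, ?_, ?_⟩
      · have hj' : j ≠ c := by simpa using hj
        exact mul_nonneg (hnn c j (Ne.symm hj')) (hpos j).le
      · simp [hvne]
      · exact mul_pos hvc (hpos v)
    rw [hbal c] at hin
    have hsum : 0 < ∑ j ∈ Finset.univ.filter (· ≠ c), Q j c := by
      by_contra h
      push_neg at h
      nlinarith [hpos c]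
    by_contra h
    push_neg at h
    have hle : ∑ j ∈ Finset.univ.filter (· ≠ c), Q j c ≤ 0 :=
      Finset.sum_nonpos fun j _ => h j
    linarith
  -- the walk on the support
  choose nxt hnxt using step
  let T := {p : Fin n × Fin n // 0 < Q p.1 p.2}
  let nextT : T → T := fun p => ⟨(nxt p.1.2 p.1.1 p.2, p.1.1), hnxt p.1.2 p.1.1 p.2⟩
  let st : ℕ → T := fun m => nextT^[m] ⟨(a0, b0), hab⟩
  let g : ℕ → Fin n := fun m => (st m).1.2
  have hst : ∀ m, st (m+1) = nextT (st m) := fun m => Function.iterate_succ_apply' nextT m _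
  have hgstep : ∀ m, 0 < Q (g (m+1)) (g m) := by
    intro m
    have h1 : g (m+1) = (st m).1.1 := by
      show (st (m+1)).1.2 = (st m).1.1
      rw [hst m]
    rw [h1]
    exact (st m).2
  -- pigeonhole: find a repeat
  obtain ⟨s, t, hstne, hgst⟩ :=
    Fintype.exists_ne_map_eq_of_card_lt (fun m : Fin (n+1) => g m.val) (by simp)
  have hexij : ∃ jj, ∃ ii, ii < jj ∧ g ii = g jj := by
    have hv : s.val ≠ t.val := fun h => hstne (Fin.ext h)
    rcases hv.lt_or_gt with h | h
    · exact ⟨t.val, s.val, h, hgst⟩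
    · exact ⟨s.val, t.val, h, hgst.symm⟩
  set j := Nat.find hexij with hjdef
  obtain ⟨i, hij, hgij⟩ : ∃ ii, ii < j ∧ g ii = g j := Nat.find_spec hexij
  have hmin : ∀ s t, s < t → t < j → g s ≠ g t := by
    intro s t hst' htj hg
    exact Nat.find_min hexij htj ⟨s, hst', hg⟩
  have hne1 : g (i+1) ≠ g i := by
    intro h
    have h2 := hgstep i
    rw [h, hdiag] at h2
    exact lt_irrefl 0 h2
  have hj2 : i + 2 ≤ j := by
    rcases Nat.lt_or_ge j (i+2) with h | h
    · exfalso
      have hji : j = i + 1 := by omega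
      rw [hji] at hgij
      exact hne1 hgij.symm
    · exact h
  obtain ⟨k, hk⟩ : ∃ k, j = i + (k + 2) := ⟨j - i - 2, by omega⟩
  -- the cycle
  set f : Fin (k+2) → Fin n := fun m => g (i + m.val) with hfdef
  have hfinj : Function.Injective f := by
    intro m m' h
    by_contra hne
    have hv : m.val ≠ m'.val := fun hv => hne (Fin.ext hv)
    have hm := m.isLt
    have hm' := m'.isLt
    rcases hv.lt_or_gt with hlt | hlt
    · exact hmin (i + m.val) (i + m'.val) (by omega) (by omega) h
    · exact hmin (i + m'.val) (i + m.val) (by omega) (by omega) h.symm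
  have hval1 : ∀ m : Fin (k+2), ((m + 1 : Fin (k+2))).val = (m.val + 1) % (k+2) := by
    intro m
    simp [Fin.add_def]
  have hedge : ∀ m : Fin (k+2), 0 < Q (f (m+1)) (f m) := by
    intro m
    have hm := m.isLt
    simp only [hfdef]
    by_cases hc : m.val < k + 1
    · rw [hval1 m, Nat.mod_eq_of_lt (by omega),
        show i + (m.val + 1) = (i + m.val) + 1 from rfl]
      exact hgstep (i + m.val)
    · have hm1 : m.val = k + 1 := by omega
      have hz : ((m + 1 : Fin (k+2))).val = 0 := by
        rw [hval1 m, hm1, show k + 1 + 1 = k + 2 from rfl, Nat.mod_self]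
      rw [hz, hm1, Nat.add_zero]
      have h0 : g i = g ((i + (k+1)) + 1) := by
        rw [hgij, show (i + (k+1)) + 1 = j by omega]
      rw [h0]
      exact hgstep (i + (k+1))
  -- the minimal flow on the cycle
  have hneF : (Finset.univ : Finset (Fin (k+2))).Nonempty := Finset.univ_nonempty
  set ε := Finset.univ.inf' hneF (fun m : Fin (k+2) => Q (f (m+1)) (f m) * pstar (f m))
    with hεdef
  have hε : 0 < ε := by
    rw [hεdef, Finset.lt_inf'_iff]
    intro m _
    exact mul_pos (hedge m) (hpos _)
  -- the cycle matrix
  set x : Fin n → Fin n → ℝ :=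
    fun u v => ∑ m : Fin (k+2), if f (m+1) = u ∧ f m = v then ε / pstar v else 0 with hxdef
  have hone : (1 : Fin (k+2)) ≠ 0 := by
    intro h
    have := congrArg Fin.val h
    simp [Fin.val_one] at this
  have hxdiag : ∀ u, x u u = 0 := by
    intro u
    simp only [hxdef]
    refine Finset.sum_eq_zero fun m _ => ?_
    rw [if_neg]
    rintro ⟨h1, h2⟩
    have h3 : m + 1 = m := hfinj (h1.trans h2.symm)
    exact hone (add_eq_left.mp h3)
  have hx_mem : ∀ (m0 : Fin (k+2)) u v, f (m0+1) = u → f m0 = v →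
      x u v = ε / pstar v := by
    intro m0 u v h1 h2
    simp only [hxdef]
    rw [Finset.sum_eq_single m0]
    · rw [if_pos ⟨h1, h2⟩]
    · intro m _ hm
      rw [if_neg]
      rintro ⟨-, hb⟩
      exact hm (hfinj (hb.trans h2.symm))
    · intro h
      exact absurd (Finset.mem_univ m0) h
  have hx_zero : ∀ u v, (∀ m : Fin (k+2), ¬(f (m+1) = u ∧ f m = v)) → x u v = 0 := by
    intro u v h
    simp only [hxdef]
    exact Finset.sum_eq_zero fun m _ => if_neg (h m)
  have hfull : ∀ (h : Fin n → ℝ) (i : Fin n), h i = 0 →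
      ∑ j ∈ Finset.univ.filter (· ≠ i), h j = ∑ j, h j := by
    intro h i hi
    rw [Finset.filter_ne', Finset.sum_erase _ hi]
  have hxbalL : ∀ i, (∑ j, x i j * pstar j)
      = ∑ m : Fin (k+2), (if f (m+1) = i then ε else 0) := by
    intro i
    simp only [hxdef]
    rw [show (∑ j, (∑ m : Fin (k+2), if f (m+1) = i ∧ f m = j then ε / pstar j else 0) * pstar j)
        = ∑ j, ∑ m : Fin (k+2),
            (if f (m+1) = i ∧ f m = j then ε / pstar j else 0) * pstar j from
      Finset.sum_congr rfl fun j _ => Finset.sum_mul _ _ _]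
    rw [Finset.sum_comm]
    refine Finset.sum_congr rfl fun m _ => ?_
    by_cases hP : f (m+1) = i
    · rw [if_pos hP]
      simp only [hP, true_and, ite_mul, zero_mul]
      rw [Finset.sum_ite_eq]
      simp only [Finset.mem_univ, if_true]
      exact div_mul_cancel₀ ε (hpos (f m)).ne'
    · rw [if_neg hP]
      simp [hP]
  have hxbalR : ∀ i, (∑ j, x j i)
      = ∑ m : Fin (k+2), (if f m = i then ε / pstar i else 0) := by
    intro i
    simp only [hxdef]
    rw [Finset.sum_comm]
    refine Finset.sum_congr rfl fun m _ => ?_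
    by_cases hP : f m = i
    · rw [if_pos hP]
      simp only [hP, eq_self_iff_true, and_true]
      rw [Finset.sum_ite_eq]
      simp
    · rw [if_neg hP]
      exact Finset.sum_eq_zero fun u _ => if_neg (by tauto)
  have hxbal : ∀ i, ∑ j ∈ Finset.univ.filter (· ≠ i), x i j * pstar j =
      (∑ j ∈ Finset.univ.filter (· ≠ i), x j i) * pstar i := by
    intro i
    have e1 : ∑ j ∈ Finset.univ.filter (· ≠ i), x i j * pstar j = ∑ j, x i j * pstar j :=
      hfull _ i (by rw [hxdiag i]; ring)
    have e2 : ∑ j ∈ Finset.univ.filter (· ≠ i), x j i = ∑ j, x j i :=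
      hfull _ i (hxdiag i)
    rw [e1, e2, hxbalL i, hxbalR i, Finset.sum_mul]
    rw [show (∑ m : Fin (k+2), (if f m = i then ε / pstar i else 0) * pstar i)
        = ∑ m : Fin (k+2), (if f m = i then ε else 0) from
      Finset.sum_congr rfl fun m _ => by
        split_ifs
        · exact div_mul_cancel₀ ε (hpos i).ne'
        · ring]
    exact Fintype.sum_bijective (fun m => m + 1)
      (Equiv.addRight (1 : Fin (k+2))).bijective
      (fun m => if f (m+1) = i then ε else 0)
      (fun m => if f m = i then ε else 0)
      (fun m => rfl)
  have hxcone : x ∈ rateConeB n pstar := by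
    refine ⟨hxdiag, ?_, hxbal⟩
    intro u v _
    simp only [hxdef]
    refine Finset.sum_nonneg fun m _ => ?_
    split_ifs
    · exact div_nonneg hε.le (hpos v).le
    · exact le_refl 0
  -- complementary matrix
  set y : Fin n → Fin n → ℝ := fun u v => 2 * Q u v - x u v with hydef
  have hycone : y ∈ rateConeB n pstar := by
    refine ⟨?_, ?_, ?_⟩
    · intro u
      simp only [hydef]
      rw [hdiag u, hxdiag u]
      ring
    · intro u v huv
      simp only [hydef]
      have hq := hnn u v huv
      by_cases hm : ∃ m : Fin (k+2), f (m+1) = u ∧ f m = v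
      · obtain ⟨m0, h1, h2⟩ := hm
        have hx1 := hx_mem m0 u v h1 h2
        have hε2 : ε ≤ Q u v * pstar v := by
          have h3 := Finset.inf'_le (f := fun m : Fin (k+2) => Q (f (m+1)) (f m) * pstar (f m))
            (Finset.mem_univ m0)
          rw [h1, h2] at h3
          rw [hεdef]
          exact h3
        have hle : ε / pstar v ≤ Q u v := (div_le_iff₀ (hpos v)).2 hε2
        rw [hx1]
        linarith
      · push_neg at hm
        have hz := hx_zero u v (by intro m hc; exact hm m hc.1 hc.2)
        rw [hz]
        linarith
    · intro i
      have e1 : ∑ j ∈ Finset.univ.filter (· ≠ i), y i j * pstar j =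
          2 * (∑ j ∈ Finset.univ.filter (· ≠ i), Q i j * pstar j)
            - ∑ j ∈ Finset.univ.filter (· ≠ i), x i j * pstar j := by
        rw [Finset.mul_sum, ← Finset.sum_sub_distrib]
        exact Finset.sum_congr rfl fun j _ => by simp only [hydef]; ring
      have e2 : ∑ j ∈ Finset.univ.filter (· ≠ i), y j i =
          2 * (∑ j ∈ Finset.univ.filter (· ≠ i), Q j i)
            - ∑ j ∈ Finset.univ.filter (· ≠ i), x j i := by
        rw [Finset.mul_sum, ← Finset.sum_sub_distrib]
      rw [e1, e2]
      linear_combination 2 * hbal i - hxbal i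
  -- apply extremality
  have hxy : (1 : ℝ) • Q = (1/2 : ℝ) • (x + y) := by
    funext u v
    simp only [Pi.smul_apply, Pi.add_apply, smul_eq_mul, hydef]
    ring
  obtain ⟨⟨a, ha0, hax⟩, -⟩ := hext 1 zero_le_one x hxcone y hycone hxy
  have hx00 : x (f (0+1)) (f 0) = ε / pstar (f 0) := hx_mem 0 _ _ rfl rfl
  have hεq : 0 < ε / pstar (f 0) := div_pos hε (hpos _)
  have hane : a ≠ 0 := by
    rintro rfl
    rw [hax] at hx00
    simp only [Pi.smul_apply, smul_eq_mul, zero_mul] at hx00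
    linarith
  have hapos : 0 < a := ha0.lt_of_ne (Ne.symm hane)
  refine ⟨k, f, ε / a, hfinj, div_pos hε hapos, ?_⟩
  intro u v
  have h1 : x u v = a * Q u v := by rw [hax]; simp [Pi.smul_apply]
  have h2 : Q u v = x u v / a := (eq_div_iff hane).2 (by rw [h1]; ring)
  rw [h2]
  simp only [hxdef]
  rw [Finset.sum_div]
  refine Finset.sum_congr rfl fun m _ => ?_
  split_ifs with h
  · rw [div_right_comm]
  · exact zero_div a
end

section
/- Every Markov chain with a strictly positive equilibrium P* is a finite conic combination (combination with nonnegative coefficients) of simple cycles with the same equilibrium P*: if (q_{ij}) ≥ 0 satisfies the balance condition with equilibrium P*, then there exist finitely many simple cycles C_1, …, C_m with rates of the form κ_s / p*_{i_j} along cycle C_s such that q_{ij} = ∑_s (rate of cycle C_s for transition A_j → A_i). -/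
/-!
Multiply the rates by the equilibrium: the fluxes `q i j * p* j` (off the diagonal) form a
nonnegative circulation, i.e. inflow equals outflow at every state. Following positive edges
from a state with positive outflow never gets stuck, so a nonzero circulation contains a
simple cycle of positive edges. Subtracting the constant flux `κ` along that cycle, with `κ`
its smallest edge, leaves a circulation with strictly smaller support; by induction every
circulation is a conic combination of cycle fluxes. Dividing back by `p* j` turns a cycle
flux `κ` into the rates `κ / p* j` of a cycle with equilibrium `P*`.
-/

open Finset Function

theorem Function.periodicPts_nonempty_of_finite {α : Type*} [Finite α] [Nonempty α]
    (f : α → α) : (periodicPts f).Nonempty := by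
  obtain ⟨x⟩ := ‹Nonempty α›
  obtain ⟨m, n, hne, heq⟩ := Finite.exists_ne_map_eq_of_infinite (fun n => f^[n] x)
  wlog hmn : m < n generalizing m n
  · exact this n m hne.symm heq.symm (by omega)
  refine ⟨f^[m] x, n - m, by omega, ?_⟩
  change f^[n - m] (f^[m] x) = f^[m] x
  rw [← iterate_add_apply, Nat.sub_add_cancel hmn.le]
  exact heq.symm

theorem exists_injective_cycle_of_forall_exists_rel {α : Type*} [Finite α] [Nonempty α]
    (r : α → α → Prop) (hirr : ∀ a, ¬ r a a) (hsucc : ∀ a, ∃ b, r a b) :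
    ∃ (k : ℕ) (c : Fin (k + 2) → α), Injective c ∧ ∀ t, r (c t) (c (t + 1)) := by
  choose g hg using hsucc
  obtain ⟨x, hx⟩ := periodicPts_nonempty_of_finite g
  have hper : 2 ≤ minimalPeriod g x := by
    have hpos := minimalPeriod_pos_of_mem_periodicPts hx
    have hne : minimalPeriod g x ≠ 1 := fun h1 => hirr x <| by
      simpa [(minimalPeriod_eq_one_iff_isFixedPt.1 h1).eq] using hg x
    omega
  obtain ⟨k, hk⟩ : ∃ k, minimalPeriod g x = k + 2 := ⟨_, (Nat.sub_add_cancel hper).symm⟩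
  refine ⟨k, fun t => g^[t] x, fun t t' h => Fin.ext ?_, fun t => ?_⟩
  · exact iterate_injOn_Iio_minimalPeriod (by simp [hk]) (by simp [hk]) h
  · have hnext : g^[((t + 1 : Fin (k + 2)) : ℕ)] x = g (g^[t] x) := by
      have hmod := iterate_mod_minimalPeriod_eq (f := g) (x := x) (n := t + 1)
      rw [hk] at hmod
      rw [Fin.val_add, Fin.val_one, hmod, iterate_succ_apply']
    simpa only [hnext] using hg (g^[t] x)

theorem Function.support_sub_ssubset {α M : Type*} [AddGroup M] {f g : α → M}
    (hgf : support g ⊆ support f) {a : α} (ha : f a ≠ 0) (hga : g a = f a) :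
    support (f - g) ⊂ support f := by
  refine ⟨fun x hx hfx => hx ?_, fun h => h ha ?_⟩
  · rw [Pi.sub_apply, hfx, notMem_support.1 fun hgx => hgf hgx hfx, sub_zero]
  · rw [Pi.sub_apply, hga, sub_self]

variable {ι : Type*}

section DecidableEq

variable [DecidableEq ι]

/-- The flux `κ` along each edge `c t → c (t + 1)` of the closed walk `c`. Here and below a
flux matrix is indexed as `f target source`, matching `q i j` for `A j → A i`. -/
def cycleFlow {k : ℕ} (c : Fin (k + 2) → ι) (κ : ℝ) (i j : ι) : ℝ :=
  ∑ t, if c (t + 1) = i ∧ c t = j then κ else 0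

section cycleFlow

variable {k : ℕ} {c : Fin (k + 2) → ι} {κ : ℝ}

theorem cycleFlow_apply_edge (hc : Injective c) (t : Fin (k + 2)) :
    cycleFlow c κ (c (t + 1)) (c t) = κ := by
  rw [cycleFlow, Fintype.sum_eq_single t fun t' ht' => if_neg fun h => ht' (hc h.2)]
  exact if_pos ⟨rfl, rfl⟩

theorem cycleFlow_eq_zero {i j : ι} (h : ∀ t, ¬(c (t + 1) = i ∧ c t = j)) :
    cycleFlow c κ i j = 0 :=
  sum_eq_zero fun t _ => if_neg (h t)

theorem cycleFlow_self (hc : Injective c) (i : ι) : cycleFlow c κ i i = 0 :=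
  cycleFlow_eq_zero fun _ ⟨h₁, h₂⟩ => one_ne_zero (add_eq_left.1 (hc (h₁.trans h₂.symm)))

theorem cycleFlow_nonneg (hκ : 0 ≤ κ) (i j : ι) : 0 ≤ cycleFlow c κ i j :=
  sum_nonneg fun _ _ => ite_nonneg hκ le_rfl

theorem cycleFlow_le {f : ι → ι → ℝ} (hc : Injective c) (hf : ∀ i j, 0 ≤ f i j)
    (hκ : ∀ t, κ ≤ f (c (t + 1)) (c t)) (i j : ι) : cycleFlow c κ i j ≤ f i j := by
  by_cases h : ∃ t, c (t + 1) = i ∧ c t = j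
  · obtain ⟨t, rfl, rfl⟩ := h
    exact (cycleFlow_apply_edge hc t).trans_le (hκ t)
  · push Not at h
    exact (cycleFlow_eq_zero fun t ht => h t ht.1 ht.2).trans_le (hf i j)

theorem sum_cycleFlow_comm [Fintype ι] (i : ι) :
    ∑ j, cycleFlow c κ i j = ∑ j, cycleFlow c κ j i := by
  simp only [cycleFlow]
  rw [sum_comm, sum_comm (γ := ι)]
  simp only [ite_and, sum_ite_irrel, sum_ite_eq, mem_univ, if_true, sum_const_zero]
  exact Fintype.sum_equiv (Equiv.addRight 1) _ _ fun _ => rfl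

end cycleFlow

def IsConicCycleSum (f : ι → ι → ℝ) : Prop :=
  ∃ (m : ℕ) (ks : Fin m → ℕ) (cs : (s : Fin m) → Fin (ks s + 2) → ι) (κ : Fin m → ℝ),
    (∀ s, 0 ≤ κ s) ∧ (∀ s, Injective (cs s)) ∧ ∀ i j, f i j = ∑ s, cycleFlow (cs s) (κ s) i j

theorem isConicCycleSum_zero : IsConicCycleSum (0 : ι → ι → ℝ) :=
  ⟨0, Fin.elim0, fun s => s.elim0, Fin.elim0, fun s => s.elim0, fun s => s.elim0,
    fun _ _ => by simp⟩

theorem IsConicCycleSum.cycleFlow_add {f : ι → ι → ℝ} (hf : IsConicCycleSum f) {k : ℕ}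
    {c : Fin (k + 2) → ι} (hc : Injective c) {κ : ℝ} (hκ : 0 ≤ κ) :
    IsConicCycleSum fun i j => cycleFlow c κ i j + f i j := by
  obtain ⟨m, ks, cs, κs, hκs, hcs, hf⟩ := hf
  refine ⟨m + 1, Fin.cons k ks, Fin.cons c cs, Fin.cons κ κs, Fin.cases hκ hκs,
    Fin.cases hc hcs, fun i j => ?_⟩
  rw [Fin.sum_univ_succ]
  exact congrArg (cycleFlow c κ i j + ·) (hf i j)

end DecidableEq

variable [Fintype ι]

structure IsCirculation (f : ι → ι → ℝ) : Prop where
  nonneg : ∀ i j, 0 ≤ f i j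
  diag : ∀ i, f i i = 0
  sum_eq : ∀ i, ∑ j, f i j = ∑ j, f j i

namespace IsCirculation

variable {f : ι → ι → ℝ}

theorem exists_out_pos_of_in_pos (hf : IsCirculation f) {u w : ι} (hu : 0 < f w u) :
    ∃ v, 0 < f v w := by
  have hout : 0 < ∑ j, f j w :=
    hf.sum_eq w ▸ hu.trans_le (single_le_sum (fun j _ => hf.nonneg w j) (mem_univ u))
  by_contra! h
  exact hout.not_ge (sum_nonpos fun j _ => h j)

theorem exists_cycle (hf : IsCirculation f) {a b : ι} (hab : 0 < f a b) :
    ∃ (k : ℕ) (c : Fin (k + 2) → ι), Injective c ∧ ∀ t, 0 < f (c (t + 1)) (c t) := by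
  have : Nonempty {v : ι // ∃ u, 0 < f u v} := ⟨⟨b, a, hab⟩⟩
  obtain ⟨k, c, hc, hedge⟩ := exists_injective_cycle_of_forall_exists_rel
    (fun u v : {v : ι // ∃ u, 0 < f u v} => 0 < f v u) (fun u => (hf.diag u).not_gt)
    fun ⟨_, w, hw⟩ => ⟨⟨w, hf.exists_out_pos_of_in_pos hw⟩, hw⟩
  exact ⟨k, Subtype.val ∘ c, Subtype.val_injective.comp hc, hedge⟩

variable [DecidableEq ι]

theorem sub_cycleFlow (hf : IsCirculation f) {k : ℕ} {c : Fin (k + 2) → ι} (hc : Injective c)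
    {κ : ℝ} (hκ : ∀ t, κ ≤ f (c (t + 1)) (c t)) :
    IsCirculation fun i j => f i j - cycleFlow c κ i j where
  nonneg i j := sub_nonneg.2 (cycleFlow_le hc hf.nonneg hκ i j)
  diag i := by rw [hf.diag, cycleFlow_self hc, sub_zero]
  sum_eq i := by rw [sum_sub_distrib, sum_sub_distrib, hf.sum_eq, sum_cycleFlow_comm]

theorem isConicCycleSum (hf : IsCirculation f) : IsConicCycleSum f := by
  induction hN : (support (uncurry f)).ncard using Nat.strong_induction_on generalizing f with
  | _ N ih =>
  by_cases hz : ∀ i j, f i j = 0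
  · exact (funext₂ hz : f = 0) ▸ isConicCycleSum_zero
  push Not at hz
  obtain ⟨a, b, hab⟩ := hz
  obtain ⟨k, c, hc, hpos⟩ := hf.exists_cycle ((hf.nonneg a b).lt_of_ne' hab)
  obtain ⟨t₀, -, hmin⟩ := exists_min_image univ (fun t => f (c (t + 1)) (c t)) univ_nonempty
  set κ := f (c (t₀ + 1)) (c t₀)
  have hκ : ∀ t, κ ≤ f (c (t + 1)) (c t) := fun t => hmin t (mem_univ t)
  have hsupp : support (uncurry fun i j => f i j - cycleFlow c κ i j) ⊂ support (uncurry f) := by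
    refine support_sub_ssubset (g := uncurry (cycleFlow c κ)) (a := (c (t₀ + 1), c t₀))
      (fun p hp => ?_) (hpos t₀).ne' (cycleFlow_apply_edge hc t₀)
    exact (((cycleFlow_nonneg (hpos t₀).le p.1 p.2).lt_of_ne' hp).trans_le
      (cycleFlow_le hc hf.nonneg hκ p.1 p.2)).ne'
  have hrest :=
    ih _ (hN ▸ Set.ncard_lt_ncard hsupp (Set.toFinite _)) (hf.sub_cycleFlow hc hκ) rfl
  simpa only [add_sub_cancel] using hrest.cycleFlow_add hc (κ := κ) (hpos t₀).le

end IsCirculation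

def flux [DecidableEq ι] (q : ι → ι → ℝ) (p : ι → ℝ) (i j : ι) : ℝ :=
  if i = j then 0 else q i j * p j

theorem isCirculation_flux [DecidableEq ι] {q : ι → ι → ℝ} {p : ι → ℝ}
    (hp : ∀ i, 0 ≤ p i) (hq : ∀ i j, i ≠ j → 0 ≤ q i j)
    (hbal : ∀ i, ∑ j ∈ univ.filter (· ≠ i), q i j * p j =
      (∑ j ∈ univ.filter (· ≠ i), q j i) * p i) :
    IsCirculation (flux q p) where
  nonneg i j := by
    unfold flux
    split_ifs with h
    exacts [le_rfl, mul_nonneg (hq i j h) (hp j)]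
  diag i := if_pos rfl
  sum_eq i := by
    have := hbal i
    rw [sum_mul, sum_filter, sum_filter] at this
    convert this using 2 with j <;> unfold flux <;> split_ifs <;> simp_all [eq_comm]

/-- Every Markov chain with a strictly positive equilibrium `P*` is a finite
conic combination of simple cycles with the same equilibrium `P*`. -/
theorem markov_chain_decomposition_into_cycles (n : ℕ) (q : Fin n → Fin n → ℝ)
    (pstar : Fin n → ℝ) (hpos : ∀ i, 0 < pstar i)
    (hq : ∀ i j, i ≠ j → 0 ≤ q i j)
    (hbal : ∀ i, ∑ j ∈ Finset.univ.filter (· ≠ i), q i j * pstar j =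
      (∑ j ∈ Finset.univ.filter (· ≠ i), q j i) * pstar i) :
    ∃ (m : ℕ) (ks : Fin m → ℕ) (fs : (s : Fin m) → Fin (ks s + 2) → Fin n)
      (κ : Fin m → ℝ),
      (∀ s, 0 ≤ κ s) ∧ (∀ s, Function.Injective (fs s)) ∧
      ∀ i j, i ≠ j → q i j =
        ∑ s, ∑ t : Fin (ks s + 2),
          if fs s (t + 1) = i ∧ fs s t = j then κ s / pstar j else 0 := by
  obtain ⟨m, ks, fs, κ, hκ, hfs, hdecomp⟩ :=
    (isCirculation_flux (fun i => (hpos i).le) hq hbal).isConicCycleSum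
  refine ⟨m, ks, fs, κ, hκ, hfs, fun i j hij => ?_⟩
  have hq_eq : q i j = flux q pstar i j / pstar j := by
    rw [flux, if_neg hij, mul_div_cancel_right₀ _ (hpos j).ne']
  simp only [hq_eq, hdecomp, cycleFlow, sum_div, ite_div, zero_div]
end

section
/- Let Q ⊆ ℝ^m be a closed convex cone containing no straight line, L : ℝ^m → ℝ^k a linear map, and suppose L(Q) is a closed cone containing no straight line. Then for every extreme ray V of L(Q) there exists an extreme ray W of Q with L(W) = V. -/
/-- `v` is a direction vector of an extreme ray of the cone `C`:
`v ≠ 0`, `v ∈ C`, and whenever a point of the ray `{λv : λ ≥ 0}` is the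
midpoint of two elements of `C`, both elements lie on the ray. -/
def IsExtremeRayDir {E : Type*} [AddCommGroup E] [Module ℝ E]
    (C : Set E) (v : E) : Prop :=
  v ≠ 0 ∧ v ∈ C ∧ ∀ lam : ℝ, 0 ≤ lam → ∀ x ∈ C, ∀ y ∈ C,
    lam • v = (1 / 2 : ℝ) • (x + y) →
    (∃ a : ℝ, 0 ≤ a ∧ x = a • v) ∧ (∃ b : ℝ, 0 ≤ b ∧ y = b • v)

/-!
The preimage `F = Q ∩ L⁻¹(ℝ≥0 v)` is a face of `Q`, because `v` spans an extreme ray of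
`L(Q)`; hence every extreme ray of `F` is an extreme ray of `Q`. Being a closed salient cone in
finite dimension, `F` admits a functional `f` with `‖x‖ ≤ f x` on `F`, so `F ∩ {f = 1}` is a
compact base of `F`. For a functional `g` with `g v > 0`, the maximum of `g ∘ L` on this base is
attained at an extreme point (Krein–Milman), which spans an extreme ray of `F` that `L` maps onto
the ray of `v`.
-/

open Set Metric

section Ray

variable {E : Type*} [AddCommGroup E] [Module ℝ E]

def ray (v : E) : Set E := {x | ∃ a : ℝ, 0 ≤ a ∧ x = a • v}

lemma smul_mem_ray {v x : E} {c : ℝ} (hc : 0 ≤ c) (hx : x ∈ ray v) : c • x ∈ ray v := by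
  obtain ⟨a, ha, rfl⟩ := hx
  exact ⟨c * a, mul_nonneg hc ha, smul_smul c a v⟩

lemma convex_ray (v : E) : Convex ℝ (ray v) := by
  rintro _ ⟨a, ha, rfl⟩ _ ⟨b, hb, rfl⟩ s t hs ht -
  exact ⟨s * a + t * b, by positivity, by rw [add_smul, smul_smul, smul_smul]⟩

lemma isClosed_ray [TopologicalSpace E] [T2Space E] [IsTopologicalAddGroup E]
    [ContinuousSMul ℝ E] (v : E) : IsClosed (ray v) := by
  have : ray v = (fun a : ℝ => a • v) '' Ici 0 := by ext; simp [ray, eq_comm]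
  rw [this]
  exact isClosedMap_smul_left v _ isClosed_Ici

end Ray

namespace IsExtremeRayDir

variable {E : Type*} [AddCommGroup E] [Module ℝ E]

lemma smul {C : Set E} (hC : ∀ c : ℝ, 0 ≤ c → ∀ x ∈ C, c • x ∈ C) {w : E}
    (hw : IsExtremeRayDir C w) {c : ℝ} (hc : 0 < c) : IsExtremeRayDir C (c • w) := by
  obtain ⟨hw0, hwC, hwext⟩ := hw
  refine ⟨smul_ne_zero hc.ne' hw0, hC c hc.le w hwC, fun lam hlam x hx y hy hmid => ?_⟩
  rw [smul_smul] at hmid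
  obtain ⟨⟨a, ha, rfl⟩, ⟨b, hb, rfl⟩⟩ := hwext (lam * c) (by positivity) x hx y hy hmid
  exact ⟨⟨a / c, by positivity, by rw [smul_smul, div_mul_cancel₀ a hc.ne']⟩,
    ⟨b / c, by positivity, by rw [smul_smul, div_mul_cancel₀ b hc.ne']⟩⟩

variable {F : Type*} [AddCommGroup F] [Module ℝ F]

lemma of_inter_preimage_ray {Q : Set E} {L : E →ₗ[ℝ] F} {v : F} {w : E}
    (hw : IsExtremeRayDir (Q ∩ L ⁻¹' ray v) w) (hv : IsExtremeRayDir (L '' Q) v) :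
    IsExtremeRayDir Q w := by
  obtain ⟨hw0, ⟨hwQ, c, hc, hLw⟩, hwext⟩ := hw
  refine ⟨hw0, hwQ, fun lam hlam x hx y hy hmid => ?_⟩
  have hLmid : (lam * c) • v = (1 / 2 : ℝ) • (L x + L y) := by
    rw [mul_smul, ← hLw, ← map_smul, hmid, map_smul, map_add]
  obtain ⟨hLx, hLy⟩ := hv.2.2 (lam * c) (mul_nonneg hlam hc) _ (mem_image_of_mem L hx) _
    (mem_image_of_mem L hy) hLmid
  exact hwext lam hlam x ⟨hx, hLx⟩ y ⟨hy, hLy⟩ hmid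

end IsExtremeRayDir

section Base

variable {E : Type*} [AddCommGroup E] [Module ℝ E]

lemma isExtremeRayDir_of_mem_extremePoints {C : Set E}
    (hC : ∀ c : ℝ, 0 ≤ c → ∀ x ∈ C, c • x ∈ C) {f : E →ₗ[ℝ] ℝ}
    (hf : ∀ x ∈ C, x ≠ 0 → 0 < f x) {p : E} (hp : p ∈ (C ∩ f ⁻¹' {1}).extremePoints ℝ) :
    IsExtremeRayDir C p := by
  obtain ⟨⟨hpC, hfp⟩, hpext⟩ := hp
  rw [mem_preimage, mem_singleton_iff] at hfp
  have hnormalize : ∀ x ∈ C, x ≠ 0 → (f x)⁻¹ • x ∈ C ∩ f ⁻¹' {1} := fun x hx hx0 =>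
    ⟨hC _ (inv_nonneg.2 (hf x hx hx0).le) x hx, by simp [(hf x hx hx0).ne']⟩
  have hleft : ∀ lam : ℝ, 0 ≤ lam → ∀ x ∈ C, ∀ y ∈ C,
      lam • p = (1 / 2 : ℝ) • (x + y) → x ∈ ray p := by
    intro lam hlam x hx y hy hmid
    have hsum : x + y = (2 * lam) • p := by rw [mul_smul, hmid]; module
    rcases eq_or_ne x 0 with rfl | hx0
    · exact ⟨0, le_rfl, (zero_smul ℝ p).symm⟩
    rcases eq_or_ne y 0 with rfl | hy0
    · exact ⟨2 * lam, by positivity, by rwa [add_zero] at hsum⟩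
    have hfx := hf x hx hx0
    have hfy := hf y hy hy0
    have hlam : f x + f y = 2 * lam := by simpa [hfp] using congrArg f hsum
    have hlam0 : 0 < 2 * lam := hlam ▸ add_pos hfx hfy
    have hseg : p ∈ openSegment ℝ ((f x)⁻¹ • x) ((f y)⁻¹ • y) := by
      refine ⟨f x / (2 * lam), f y / (2 * lam), by positivity, by positivity, ?_, ?_⟩
      · rw [← add_div, hlam, div_self hlam0.ne']
      · rw [div_eq_inv_mul, div_eq_inv_mul, mul_smul, mul_smul, smul_inv_smul₀ hfx.ne',
          smul_inv_smul₀ hfy.ne', ← smul_add, hsum, inv_smul_smul₀ hlam0.ne']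
    have hxp := hpext (hnormalize x hx hx0) (hnormalize y hy hy0) hseg
    exact ⟨f x, hfx.le, by rw [← hxp, smul_inv_smul₀ hfx.ne']⟩
  refine ⟨fun h => by simp [h] at hfp, hpC, fun lam hlam x hx y hy hmid =>
    ⟨hleft lam hlam x hx y hy hmid, hleft lam hlam y hy x hx (by rwa [add_comm])⟩⟩

end Base

section KreinMilman

variable {E : Type*} [AddCommGroup E] [Module ℝ E] [TopologicalSpace E] [T2Space E]
  [IsTopologicalAddGroup E] [ContinuousSMul ℝ E] [LocallyConvexSpace ℝ E] {s : Set E}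

lemma IsCompact.exists_mem_extremePoints_isMaxOn (hs : IsCompact s) (hne : s.Nonempty)
    (l : StrongDual ℝ E) : ∃ y ∈ s.extremePoints ℝ, IsMaxOn l s y := by
  obtain ⟨z, hzs, hz⟩ := hs.exists_isMaxOn hne l.continuous.continuousOn
  have hexp : IsExposed ℝ s {y ∈ s | ∀ z ∈ s, l z ≤ l y} := fun _ => ⟨l, rfl⟩
  obtain ⟨y, hy⟩ := (hexp.isCompact hs).extremePoints_nonempty ⟨z, hzs, hz⟩
  exact ⟨y, hexp.isExtreme.extremePoints_subset_extremePoints hy, hy.1.2⟩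

end KreinMilman

namespace ProperCone

section OfConvex

variable {E : Type*} [TopologicalSpace E] [AddCommGroup E] [Module ℝ E]

def ofConvex (s : Set E) (hclosed : IsClosed s) (hconv : Convex ℝ s)
    (hsmul : ∀ c : ℝ, 0 ≤ c → ∀ x ∈ s, c • x ∈ s) (hne : s.Nonempty) : ProperCone ℝ E where
  carrier := s
  add_mem' {x y} hx hy := by
    convert hsmul 2 zero_le_two _ (hconv hx hy one_half_pos.le one_half_pos.le (add_halves 1))
      using 1
    module
  zero_mem' := by
    obtain ⟨x, hx⟩ := hne
    simpa using hsmul 0 le_rfl x hx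
  smul_mem' c x hx := hsmul c c.2 x hx
  isClosed' := hclosed

end OfConvex

variable {E : Type*} [NormedAddCommGroup E] [NormedSpace ℝ E] [FiniteDimensional ℝ E]

lemma exists_strongDual_norm_le (C : ProperCone ℝ E) (hC : ∀ x ∈ C, x ≠ 0 → -x ∉ C) :
    ∃ f : StrongDual ℝ E, ∀ x ∈ C, ‖x‖ ≤ f x := by
  -- Functionals separating the points of the compact set `C ∩ sphere 0 1` from `-C`, rescaled to
  -- exceed `1` there, sum over a finite subcover to a functional `≥ 1` on all of it.
  set S := (C : Set E) ∩ sphere 0 1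
  have hS : IsCompact S := (isCompact_sphere 0 1).inter_left C.isClosed
  have hsep : ∀ x ∈ S, ∃ f : StrongDual ℝ E, (∀ y ∈ C, 0 ≤ f y) ∧ 1 < f x := by
    rintro x ⟨hxC, hx1⟩
    obtain ⟨f, hfC, hfx⟩ :=
      C.hyperplane_separation_point (hC x hxC (ne_zero_of_mem_unit_sphere ⟨x, hx1⟩))
    rw [map_neg, neg_lt_zero] at hfx
    refine ⟨(2 / f x) • f, fun y hy => ?_, ?_⟩
    · simpa using mul_nonneg (div_pos two_pos hfx).le (hfC y hy)
    · simp [div_mul_cancel₀ _ hfx.ne']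
  choose! f hfC hfS using hsep
  obtain ⟨t, ht⟩ := hS.elim_finite_subcover (fun x : S => {y | 1 < f x y})
    (fun x => isOpen_lt continuous_const (f x).continuous)
    (fun x hx => mem_iUnion.2 ⟨⟨x, hx⟩, hfS x hx⟩)
  set g := ∑ i ∈ t, f i
  have hgS : ∀ y ∈ S, 1 ≤ g y := by
    intro y hy
    obtain ⟨i, hi, hiy⟩ := mem_iUnion₂.1 (ht hy)
    calc 1 ≤ f i y := le_of_lt hiy
      _ ≤ ∑ j ∈ t, f j y :=
        Finset.single_le_sum (f := fun j : S => f j y) (fun j _ => hfC j j.2 y hy.1) hi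
      _ = g y := by simp [g]
  refine ⟨g, fun x hx => ?_⟩
  rcases eq_or_ne x 0 with rfl | hx0
  · simp
  have hx := hgS (‖x‖⁻¹ • x) ⟨C.smul_mem hx (by positivity), by simp [norm_smul, hx0]⟩
  rwa [map_smul, smul_eq_mul, le_inv_mul_iff₀ (norm_pos_iff.2 hx0), mul_one] at hx

lemma exists_isExtremeRayDir_pos (C : ProperCone ℝ E) (hC : ∀ x ∈ C, x ≠ 0 → -x ∉ C)
    (g : StrongDual ℝ E) {x₀ : E} (hx₀ : x₀ ∈ C) (hg : 0 < g x₀) :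
    ∃ w, IsExtremeRayDir (C : Set E) w ∧ 0 < g w := by
  obtain ⟨f, hf⟩ := C.exists_strongDual_norm_le hC
  have hfpos : ∀ x ∈ C, x ≠ 0 → 0 < f x := fun x hx hx0 =>
    (norm_pos_iff.2 hx0).trans_le (hf x hx)
  set B := (C : Set E) ∩ f ⁻¹' {1}
  have hB : IsCompact B := by
    refine (isCompact_closedBall 0 1).of_isClosed_subset
      (C.isClosed.inter (isClosed_singleton.preimage f.continuous)) ?_
    rintro x ⟨hx, hfx : f x = 1⟩
    simpa [hfx] using hf x hx
  have hfx₀ : 0 < f x₀ := hfpos x₀ hx₀ (by rintro rfl; simp at hg)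
  have hx₀B : (f x₀)⁻¹ • x₀ ∈ B := ⟨C.smul_mem hx₀ (inv_nonneg.2 hfx₀.le), by simp [hfx₀.ne']⟩
  obtain ⟨p, hp, hpmax⟩ := hB.exists_mem_extremePoints_isMaxOn ⟨_, hx₀B⟩ g
  refine ⟨p, isExtremeRayDir_of_mem_extremePoints (fun c hc x hx => C.smul_mem hx hc)
    (f := f.toLinearMap) hfpos hp, ?_⟩
  calc 0 < g ((f x₀)⁻¹ • x₀) := by rw [map_smul, smul_eq_mul]; positivity
    _ ≤ g p := hpmax hx₀B

end ProperCone

theorem extreme_ray_preimage_general (m k : ℕ) (Q : Set (Fin m → ℝ))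
    (hQclosed : IsClosed Q) (hQconvex : Convex ℝ Q)
    (hQcone : ∀ c : ℝ, 0 ≤ c → ∀ x ∈ Q, c • x ∈ Q)
    (hQsalient : ∀ x ∈ Q, x ≠ 0 → -x ∉ Q)
    (L : (Fin m → ℝ) →ₗ[ℝ] (Fin k → ℝ))
    (v : Fin k → ℝ) (hv : IsExtremeRayDir (L '' Q) v) :
    ∃ w : Fin m → ℝ, IsExtremeRayDir Q w ∧ L w = v := by
  obtain ⟨u, huQ, hLu⟩ := hv.2.1
  have huF : u ∈ Q ∩ L ⁻¹' ray v := ⟨huQ, 1, zero_le_one, by rw [hLu, one_smul]⟩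
  let F := ProperCone.ofConvex (Q ∩ L ⁻¹' ray v)
    (hQclosed.inter ((isClosed_ray v).preimage L.continuous_of_finiteDimensional))
    (hQconvex.inter ((convex_ray v).linear_preimage L))
    (fun c hc x hx => ⟨hQcone c hc x hx.1, by simpa using smul_mem_ray hc hx.2⟩)
    ⟨u, huF⟩
  obtain ⟨g, -, hgv⟩ := exists_dual_vector ℝ v (norm_ne_zero_iff.2 hv.1)
  obtain ⟨w, hw, hgw⟩ := F.exists_isExtremeRayDir_pos
    (fun x hx hx0 hnx => hQsalient x hx.1 hx0 hnx.1) (g.comp L.toContinuousLinearMap)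
    huF (by simpa [hLu, hgv] using hv.1)
  obtain ⟨c, hc, hLw⟩ := hw.2.1.2
  have hcpos : 0 < c := hc.lt_of_ne (by rintro rfl; simp [hLw] at hgw)
  exact ⟨c⁻¹ • w, (hw.of_inter_preimage_ray hv).smul hQcone (inv_pos.2 hcpos),
    by rw [map_smul, hLw, inv_smul_smul₀ hcpos.ne']⟩

/-- There always exists an extreme ray in the preimage of an extreme ray:
if `Q ⊆ ℝ^m` is a closed convex cone without straight lines, `L` is linear and
`L(Q)` is a closed cone without straight lines, then every extreme ray `V` of
`L(Q)` is the image of some extreme ray `W` of `Q`. -/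
theorem extreme_ray_preimage (m k : ℕ) (Q : Set (Fin m → ℝ))
    (hQclosed : IsClosed Q) (hQconvex : Convex ℝ Q)
    (hQcone : ∀ c : ℝ, 0 ≤ c → ∀ x ∈ Q, c • x ∈ Q)
    (hQsalient : ∀ x ∈ Q, x ≠ 0 → -x ∉ Q)
    (L : (Fin m → ℝ) →ₗ[ℝ] (Fin k → ℝ))
    (hLQclosed : IsClosed (L '' Q))
    (hLQsalient : ∀ x ∈ L '' Q, x ≠ 0 → -x ∉ L '' Q)
    (v : Fin k → ℝ) (hv : IsExtremeRayDir (L '' Q) v) :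
    ∃ w : Fin m → ℝ, IsExtremeRayDir Q w ∧ L w = v :=
  extreme_ray_preimage_general m k Q hQclosed hQconvex hQcone hQsalient L v hv
end

section
/- Fix n ≥ 3, a positive vector P* and a point P with p_1/p*_1 ≤ p_j/p*_j for all j. Let v_k be the velocity at P of the simple cycle A_1 → A_2 → … → A_k → A_1 (k > 2) with rates 1/p*_j for A_j → A_{j+1}, i.e. (v_k)_j = p_{j−1}/p*_{j−1} − p_j/p*_j (cyclically, for j = 1,…,k) and (v_k)_j = 0 otherwise. Let v_{k−1} be the velocity at P of the cycle A_2 → … → A_k → A_2 with rates 1/p*_j, and let v_2 be the velocity of the step A_1 ⇌ A_2 with rates κ/p*_1 and κ/p*_2, where κ = (p_k/p*_k − p_1/p*_1)/(p_2/p*_2 − p_1/p*_1) (assuming p_2/p*_2 > p_1/p*_1). Then κ ≥ 0 and v_k = v_{k−1} + v_2. -/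
open Finset

/-- Induction step of the cycle decomposition: the velocity of a simple cycle
`A₁ → A₂ → … → A_k → A₁` (length `k = c+3 > 2`, rates `1/p*_j`) at a point `P`
where `p₁/p*₁` is minimal is the sum of the velocity of the shorter cycle
`A₂ → … → A_k → A₂` and the velocity of the step `A₁ ⇌ A₂` with rates
`κ/p*₁, κ/p*₂`, where `κ = (p_k/p*_k − p₁/p*₁)/(p₂/p*₂ − p₁/p*₁) ≥ 0`. -/
theorem cycle_velocity_decomposition (n c : ℕ) (hkn : c + 3 ≤ n)
    (pstar p : Fin n → ℝ) (hpos : ∀ i, 0 < pstar i)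
    (x : Fin n → ℝ) (hx : ∀ j, x j = p j / pstar j)
    (ι : Fin (c + 3) → Fin n) (hι : ι = Fin.castLE hkn)
    (hmin : ∀ j : Fin n, x (ι 0) ≤ x j)
    (hlt : x (ι 0) < x (ι 1))
    (vk vkm1 v2 : Fin n → ℝ)
    (hvk : ∀ i, vk i =
      ∑ m : Fin (c + 3), if ι m = i then x (ι (m - 1)) - x (ι m) else 0)
    (hvkm1 : ∀ i, vkm1 i =
      ∑ m : Fin (c + 2), if ι (m.succ) = i
        then x (ι ((m - 1).succ)) - x (ι (m.succ)) else 0)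
    (κ : ℝ)
    (hκ : κ = (x (ι (Fin.last (c + 2))) - x (ι 0)) / (x (ι 1) - x (ι 0)))
    (hv2 : ∀ i, v2 i =
      if i = ι 0 then κ * (x (ι 1) - x (ι 0))
      else if i = ι 1 then κ * (x (ι 0) - x (ι 1)) else 0) :
    0 ≤ κ ∧ ∀ i, vk i = vkm1 i + v2 i := by
  have hinj : Function.Injective ι := by
    rw [hι]; exact Fin.castLE_injective _
  have hne : x (ι 1) - x (ι 0) ≠ 0 := sub_ne_zero.2 (ne_of_gt hlt)
  have hκ1 : κ * (x (ι 1) - x (ι 0)) = x (ι (Fin.last (c + 2))) - x (ι 0) := by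
    rw [hκ, div_mul_cancel₀ _ hne]
  have hκ2 : κ * (x (ι 0) - x (ι 1)) = x (ι 0) - x (ι (Fin.last (c + 2))) := by
    have : κ * (x (ι 0) - x (ι 1)) = -(κ * (x (ι 1) - x (ι 0))) := by ring
    rw [this, hκ1]; ring
  have hι01 : ι 0 ≠ ι 1 := fun h => by simpa using hinj h
  -- index computations
  have h1 : ((0 : Fin (c + 3)) - 1) = Fin.last (c + 2) := by
    ext; rw [Fin.coe_sub_one]; simp
  have h2 : (((0 : Fin (c + 2)) - 1).succ) = Fin.last (c + 2) := by
    ext; rw [Fin.val_succ, Fin.coe_sub_one]; simp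
  have h3 : ∀ j : Fin (c + 1), (j.succ.succ - 1 : Fin (c + 3)) = (j.succ - 1).succ := by
    intro j
    ext
    rw [Fin.val_succ, Fin.coe_sub_one, Fin.coe_sub_one, if_neg (Fin.succ_ne_zero _),
      if_neg (Fin.succ_ne_zero _)]
    simp
  have h4 : ((0 : Fin (c + 2)).succ : Fin (c + 3)) = 1 := rfl
  have hsucc1 : ((1 : Fin (c + 3)) - 1) = 0 := by
    ext; rw [Fin.coe_sub_one, if_neg (by simp [Fin.ext_iff])]; simp
  refine ⟨by rw [hκ]; exact div_nonneg (sub_nonneg.2 (hmin _)) (sub_nonneg.2 hlt.le), ?_⟩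
  intro i
  have e1 : (∑ m : Fin (c + 3), if ι m = i then x (ι (m - 1)) - x (ι m) else 0)
      = (if ι 0 = i then x (ι (Fin.last (c + 2))) - x (ι 0) else 0)
        + ((if ι 1 = i then x (ι 0) - x (ι 1) else 0)
        + ∑ j : Fin (c + 1),
            if ι j.succ.succ = i then x (ι ((j.succ - 1).succ)) - x (ι j.succ.succ) else 0) := by
    rw [Fin.sum_univ_succ (fun m : Fin (c + 3) =>
      if ι m = i then x (ι (m - 1)) - x (ι m) else 0)]
    rw [Fin.sum_univ_succ (fun j : Fin (c + 2) =>
      if ι j.succ = i then x (ι (j.succ - 1)) - x (ι j.succ) else 0)]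
    congr 1
    · rw [h1]
    congr 1
    · rw [h4, hsucc1]
    · exact Finset.sum_congr rfl fun j _ => by rw [h3 j]
  have e2 : (∑ m : Fin (c + 2), if ι m.succ = i
        then x (ι ((m - 1).succ)) - x (ι (m.succ)) else 0)
      = (if ι 1 = i then x (ι (Fin.last (c + 2))) - x (ι 1) else 0)
        + ∑ j : Fin (c + 1),
            if ι j.succ.succ = i then x (ι ((j.succ - 1).succ)) - x (ι j.succ.succ) else 0 := by
    rw [Fin.sum_univ_succ (fun m : Fin (c + 2) =>
      if ι m.succ = i then x (ι ((m - 1).succ)) - x (ι m.succ) else 0)]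
    congr 1
    rw [h4, h2]
  rw [hvk i, hvkm1 i, hv2 i, e1, e2]
  by_cases hi0 : ι 0 = i
  · have hi1 : ι 1 ≠ i := fun h => hι01 (hi0.trans h.symm)
    simp only [if_pos hi0, if_neg hi1, if_pos hi0.symm, hκ1]
    ring
  · by_cases hi1 : ι 1 = i
    · simp only [if_neg hi0, if_pos hi1, if_neg (fun h : i = ι 0 => hi0 h.symm),
        if_pos hi1.symm, hκ2]
      ring
    · simp only [if_neg hi0, if_neg hi1, if_neg (fun h : i = ι 0 => hi0 h.symm),
        if_neg (fun h : i = ι 1 => hi1 h.symm)]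
      ring
end

section
/- Fix n, a strictly positive vector P* and any vector P. The cone of possible velocities at P of general Markov kinetics with equilibrium P* coincides with the cone of possible velocities at P of Markov kinetics satisfying detailed balance with the same equilibrium: Q^n_B(P,P*) = Q^n_DB(P,P*). In particular, for every nonnegative rate matrix (q_{ij}) satisfying the balance condition with equilibrium P*, there exists a nonnegative rate matrix (q'_{ij}) with q'_{ij} p*_j = q'_{ji} p*_i for all i ≠ j, such that ∑_{j≠i}(q_{ij} p_j − q_{ji} p_i) = ∑_{j≠i}(q'_{ij} p_j − q'_{ji} p_i) for all i. -/
open Finset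

/-- `Q^n_B(P,P*)`: possible velocities at `P` of Markov kinetics with
equilibrium `P*` (balance condition). -/
def velConeB (n : ℕ) (pstar p : Fin n → ℝ) : Set (Fin n → ℝ) :=
  {v | ∃ q : Fin n → Fin n → ℝ,
    (∀ i j, i ≠ j → 0 ≤ q i j) ∧
    (∀ i, ∑ j ∈ Finset.univ.filter (· ≠ i), q i j * pstar j =
      (∑ j ∈ Finset.univ.filter (· ≠ i), q j i) * pstar i) ∧
    (∀ i, v i = ∑ j ∈ Finset.univ.filter (· ≠ i), (q i j * p j - q j i * p i))}

/-- `Q^n_DB(P,P*)`: possible velocities at `P` of Markov kinetics with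
detailed balance and equilibrium `P*`. -/
def velConeDB (n : ℕ) (pstar p : Fin n → ℝ) : Set (Fin n → ℝ) :=
  {v | ∃ q : Fin n → Fin n → ℝ,
    (∀ i j, i ≠ j → 0 ≤ q i j) ∧
    (∀ i j, i ≠ j → q i j * pstar j = q j i * pstar i) ∧
    (∀ i, v i = ∑ j ∈ Finset.univ.filter (· ≠ i), (q i j * p j - q j i * p i))}

/-!
Put `x = p / pstar` and `a i j = q i j * pstar j`. Then the velocity is
`v i = ∑ j, a i j * (x j - x i)`, balance says that `a` has equal row and column sums, and
detailed balance that `a` is symmetric. So it suffices to realise `v` by a symmetric `b ≥ 0`.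

Write `x` as a constant plus a nonnegative combination of indicators `y` of its upper level sets.
For such `y` the velocity `∑ j, a i j * (y j - y i)` has total sum zero (balance), is nonnegative
off the level set and nonpositive on it (maximum principle), and any such vector is realised by
symmetric fluxes across the cut. Symmetric fluxes realising a velocity at `y` are turned into
fluxes realising it at `x` by multiplying them with the slopes `(y j - y i) / (x j - x i) ≥ 0`;
and velocities realised at `x` by symmetric fluxes form a convex cone.
-/

section MarkovKinetics

variable {ι : Type*} [Fintype ι]

def fluxVelocity (a : ι → ι → ℝ) (x : ι → ℝ) : ι → ℝ :=
  fun i => ∑ j, a i j * (x j - x i)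

theorem fluxVelocity_add_left (a b : ι → ι → ℝ) (x : ι → ℝ) :
    fluxVelocity (a + b) x = fluxVelocity a x + fluxVelocity b x := by
  ext i
  simp only [fluxVelocity, Pi.add_apply, add_mul, sum_add_distrib]

theorem fluxVelocity_smul_left (c : ℝ) (a : ι → ι → ℝ) (x : ι → ℝ) :
    fluxVelocity (c • a) x = c • fluxVelocity a x := by
  ext i
  simp only [fluxVelocity, Pi.smul_apply, smul_eq_mul, mul_sum, mul_assoc]

theorem fluxVelocity_add_right (a : ι → ι → ℝ) (x y : ι → ℝ) :
    fluxVelocity a (x + y) = fluxVelocity a x + fluxVelocity a y := by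
  ext i
  simp only [fluxVelocity, Pi.add_apply, ← sum_add_distrib]
  exact sum_congr rfl fun j _ => by ring

theorem fluxVelocity_smul_right (a : ι → ι → ℝ) (c : ℝ) (x : ι → ℝ) :
    fluxVelocity a (c • x) = c • fluxVelocity a x := by
  ext i
  simp only [fluxVelocity, Pi.smul_apply, smul_eq_mul, mul_sum]
  exact sum_congr rfl fun j _ => by ring

theorem fluxVelocity_const (a : ι → ι → ℝ) (c : ℝ) : fluxVelocity a (fun _ => c) = 0 := by
  ext i
  simp [fluxVelocity]

theorem sum_fluxVelocity_eq_zero {a : ι → ι → ℝ} (hbal : ∀ i, ∑ j, a i j = ∑ j, a j i)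
    (x : ι → ℝ) : ∑ i, fluxVelocity a x i = 0 := by
  simp only [fluxVelocity, mul_sub, sum_sub_distrib]
  rw [sum_comm, sub_eq_zero]
  exact sum_congr rfl fun i _ => by rw [← sum_mul, ← sum_mul, hbal]

theorem fluxVelocity_nonneg_of_forall_le {a : ι → ι → ℝ} (ha : 0 ≤ a) {x : ι → ℝ}
    {i : ι} (hi : ∀ j, x i ≤ x j) : 0 ≤ fluxVelocity a x i :=
  sum_nonneg fun j _ => mul_nonneg (ha i j) (sub_nonneg.mpr (hi j))

theorem fluxVelocity_nonpos_of_forall_ge {a : ι → ι → ℝ} (ha : 0 ≤ a) {x : ι → ℝ}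
    {i : ι} (hi : ∀ j, x j ≤ x i) : fluxVelocity a x i ≤ 0 :=
  sum_nonpos fun j _ => mul_nonpos_of_nonneg_of_nonpos (ha i j) (sub_nonpos.mpr (hi j))

def symmetricVelocityCone (x : ι → ℝ) : PointedCone ℝ (ι → ℝ) where
  carrier :=
    {w | ∃ b : ι → ι → ℝ, 0 ≤ b ∧ (∀ i j, b i j = b j i) ∧ fluxVelocity b x = w}
  zero_mem' := ⟨0, le_rfl, fun _ _ => rfl, by simpa using fluxVelocity_smul_left 0 0 x⟩
  add_mem' := by
    rintro _ _ ⟨b, hb, hbs, rfl⟩ ⟨b', hb', hbs', rfl⟩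
    exact ⟨b + b', add_nonneg hb hb', fun i j => by simp [hbs i j, hbs' i j],
      fluxVelocity_add_left b b' x⟩
  smul_mem' := by
    rintro ⟨c, hc⟩ _ ⟨b, hb, hbs, rfl⟩
    exact ⟨c • b, smul_nonneg hc hb, fun i j => by simp [hbs i j],
      fluxVelocity_smul_left c b x⟩

theorem symmetricVelocityCone_le_of_monotone {x x' : ι → ℝ}
    (hmono : ∀ i j, x i ≤ x j → x' i ≤ x' j) :
    symmetricVelocityCone x' ≤ symmetricVelocityCone x := by
  rintro _ ⟨b, hb, hbs, rfl⟩
  set r : ι → ι → ℝ := fun i j => (x' j - x' i) / (x j - x i)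
  have hr : ∀ i j, 0 ≤ r i j := fun i j => by
    rcases le_total (x i) (x j) with h | h
    · exact div_nonneg (sub_nonneg.mpr (hmono i j h)) (sub_nonneg.mpr h)
    · exact div_nonneg_of_nonpos (sub_nonpos.mpr (hmono j i h)) (sub_nonpos.mpr h)
  have hrs : ∀ i j, r i j = r j i := fun i j => by
    simp only [r, ← neg_sub (x' i), ← neg_sub (x i), neg_div_neg_eq]
  -- where `x i = x j`, the slope is `0 / 0 = 0`, and so is `x' j - x' i`
  have hslope : ∀ i j, r i j * (x j - x i) = x' j - x' i := fun i j => by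
    by_cases h : x i = x j
    · simp [h, le_antisymm (hmono i j h.le) (hmono j i h.ge)]
    · exact div_mul_cancel₀ _ (sub_ne_zero.mpr (Ne.symm h))
  refine ⟨fun i j => b i j * r i j, fun i j => mul_nonneg (hb i j) (hr i j),
    fun i j => congrArg₂ (· * ·) (hbs i j) (hrs i j), ?_⟩
  ext i
  exact sum_congr rfl fun j _ => by rw [mul_assoc, hslope]

theorem mem_symmetricVelocityCone_of_zero_one {y w : ι → ℝ} (hy : ∀ i, y i = 0 ∨ y i = 1)
    (hw : ∑ i, w i = 0) (hw₀ : ∀ i, y i = 0 → 0 ≤ w i)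
    (hw₁ : ∀ i, y i = 1 → w i ≤ 0) :
    w ∈ symmetricVelocityCone y := by
  have hout : ∀ i, w i * y i ≤ 0 := fun i => by
    rcases hy i with h | h <;> simp [h, hw₁]
  have hin : ∀ i, 0 ≤ w i * (1 - y i) := fun i => by
    rcases hy i with h | h <;> simp [h, hw₀]
  set G := ∑ j, w j * y j with hG
  have hG_nonpos : G ≤ 0 := sum_nonpos fun j _ => hout j
  have hG_eq : G = -∑ j, w j * (1 - y j) := by
    simp only [mul_sub, mul_one, sum_sub_distrib, hw, hG]; ring
  have hcancel : ∀ i, w i / G * G = w i := fun i => by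
    by_cases hG0 : G = 0
    · have h₁ : -(w i * y i) ≤ -G := by
        simpa [hG] using single_le_sum (f := fun j => -(w j * y j))
          (fun j _ => neg_nonneg.mpr (hout j)) (mem_univ i)
      have h₀ : w i * (1 - y i) ≤ -G := by
        rw [hG_eq, neg_neg]; exact single_le_sum (fun j _ => hin j) (mem_univ i)
      have : w i = 0 := by
        rcases hy i with h | h
        · exact le_antisymm (by simpa [h, hG0] using h₀) (hw₀ i h)
        · exact le_antisymm (hw₁ i h) (by simpa [h, hG0] using h₁)
      simp [this]
    · exact div_mul_cancel₀ _ hG0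
  -- the surplus `w i ≥ 0` of each `i` with `y i = 0` is spread over the deficits `w j ≤ 0`
  -- of the `j` with `y j = 1`, in proportion to their sizes; `-G` is the total amount moved
  refine ⟨fun i j => w i * w j * (y j - y i) ^ 2 / G, fun i j => ?_, fun i j => by ring, ?_⟩
  · refine div_nonneg_of_nonpos ?_ hG_nonpos
    rcases hy i with hi | hi <;> rcases hy j with hj | hj <;> simp only [hi, hj] <;> norm_num
    · exact mul_nonpos_of_nonneg_of_nonpos (hw₀ i hi) (hw₁ j hj)
    · exact mul_nonpos_of_nonpos_of_nonneg (hw₁ i hi) (hw₀ j hj)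
  · ext i
    have hcube : ∀ j, (y j - y i) ^ 3 = y j - y i := fun j => by
      rcases hy i with hi | hi <;> rcases hy j with hj | hj <;> norm_num [hi, hj]
    calc fluxVelocity _ y i = w i / G * ∑ j, w j * (y j - y i) ^ 3 := by
          simp only [fluxVelocity, mul_sum]; exact sum_congr rfl fun j _ => by ring
      _ = w i / G * (G - (∑ j, w j) * y i) := by
          simp only [hcube, mul_sub, sum_sub_distrib, sum_mul, hG]
      _ = w i := by rw [hw, zero_mul, sub_zero, hcancel]

theorem fluxVelocity_mem_symmetricVelocityCone_of_zero_one {a : ι → ι → ℝ} (ha : 0 ≤ a)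
    (hbal : ∀ i, ∑ j, a i j = ∑ j, a j i) {y : ι → ℝ} (hy : ∀ i, y i = 0 ∨ y i = 1) :
    fluxVelocity a y ∈ symmetricVelocityCone y := by
  have hy_le : ∀ j, y j ≤ 1 := fun j => by rcases hy j with h | h <;> simp [h]
  have hy_ge : ∀ j, 0 ≤ y j := fun j => by rcases hy j with h | h <;> simp [h]
  exact mem_symmetricVelocityCone_of_zero_one hy (sum_fluxVelocity_eq_zero hbal y)
    (fun i hi => fluxVelocity_nonneg_of_forall_le ha fun j => hi ▸ hy_ge j)
    (fun i hi => fluxVelocity_nonpos_of_forall_ge ha fun j => hi ▸ hy_le j)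

theorem fluxVelocity_mem_symmetricVelocityCone {a : ι → ι → ℝ} (ha : 0 ≤ a)
    (hbal : ∀ i, ∑ j, a i j = ∑ j, a j i) (x : ι → ℝ) :
    fluxVelocity a x ∈ symmetricVelocityCone x := by
  classical
  suffices h : ∀ V : Finset ℝ, ∀ x : ι → ℝ, (∀ i, x i ∈ V) →
      fluxVelocity a x ∈ symmetricVelocityCone x from
    h (univ.image x) x fun i => mem_image_of_mem x (mem_univ i)
  intro V
  induction V using Finset.induction_on_max with
  | empty =>
    intro x hx
    have : IsEmpty ι := ⟨fun i => notMem_empty _ (hx i)⟩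
    exact Subsingleton.elim (fluxVelocity a x) 0 ▸ zero_mem _
  | insert μ V hlt ih =>
    intro x hx
    rcases V.eq_empty_or_nonempty with rfl | hV
    · have hconst : x = fun _ => μ := funext fun i => by simpa using hx i
      exact hconst ▸ (fluxVelocity_const a μ).symm ▸ zero_mem _
    set ν := V.max' hV
    have hνμ : ν < μ := hlt ν (V.max'_mem hV)
    have hle : ∀ i, x i ∈ V → x i ≤ ν := fun i h => V.le_max' _ h
    set x' : ι → ℝ := fun i => min (x i) ν
    set y : ι → ℝ := fun i => if ν < x i then 1 else 0
    have hdecomp : x = x' + (μ - ν) • y := funext fun i => by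
      rcases mem_insert.mp (hx i) with h | h
      · simp [x', y, h, hνμ, hνμ.le]
      · simp [x', y, hle i h, not_lt.mpr (hle i h)]
    have hx' : ∀ i, x' i ∈ V := fun i => by
      rcases mem_insert.mp (hx i) with h | h
      · simpa [x', h, hνμ.le] using V.max'_mem hV
      · simpa [x', hle i h] using h
    have hv : fluxVelocity a x = fluxVelocity a x' + (μ - ν) • fluxVelocity a y := by
      rw [← fluxVelocity_smul_right, ← fluxVelocity_add_right, ← hdecomp]
    rw [hv]
    refine add_mem (symmetricVelocityCone_le_of_monotone ?_ (ih x' hx'))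
      (PointedCone.smul_mem _ (sub_nonneg.mpr hνμ.le)
        (symmetricVelocityCone_le_of_monotone ?_ (fluxVelocity_mem_symmetricVelocityCone_of_zero_one
          ha hbal fun i => ite_eq_or_eq _ _ _ |>.symm)))
    · exact fun i j h => min_le_min_right ν h
    · intro i j h
      by_cases hi : ν < x i
      · simp [y, hi, hi.trans_le h]
      · by_cases hj : ν < x j <;> simp [y, hi, hj]

end MarkovKinetics

section MasterEquation

variable {ι : Type*} [DecidableEq ι]

-- the diagonal of `q` is unconstrained (possibly negative), so it is discarded
def fluxMatrix (q : ι → ι → ℝ) (pstar : ι → ℝ) : ι → ι → ℝ :=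
  fun i j => if i = j then 0 else q i j * pstar j

theorem fluxMatrix_of_ne {q : ι → ι → ℝ} {pstar : ι → ℝ} {i j : ι} (h : i ≠ j) :
    fluxMatrix q pstar i j = q i j * pstar j :=
  if_neg h

theorem fluxMatrix_nonneg {q : ι → ι → ℝ} {pstar : ι → ℝ}
    (hq : ∀ i j, i ≠ j → 0 ≤ q i j) (hpos : ∀ i, 0 < pstar i) :
    0 ≤ fluxMatrix q pstar := fun i j => by
  by_cases h : i = j
  · simp [fluxMatrix, h]
  · exact (fluxMatrix_of_ne h).symm ▸ mul_nonneg (hq i j h) (hpos j).le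

variable [Fintype ι]

theorem balance_of_detailed_balance {q : ι → ι → ℝ} {pstar : ι → ℝ}
    (hdb : ∀ i j, i ≠ j → q i j * pstar j = q j i * pstar i) (i : ι) :
    ∑ j ∈ univ.filter (· ≠ i), q i j * pstar j =
      (∑ j ∈ univ.filter (· ≠ i), q j i) * pstar i := by
  rw [sum_mul]
  exact sum_congr rfl fun j hj => hdb i j (mem_filter.mp hj).2.symm

theorem sum_filter_ne_eq_fluxVelocity {q a : ι → ι → ℝ} {pstar : ι → ℝ}
    (p : ι → ℝ) (hpos : ∀ i, 0 < pstar i) {i : ι}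
    (hbal : ∑ j ∈ univ.filter (· ≠ i), q i j * pstar j =
      (∑ j ∈ univ.filter (· ≠ i), q j i) * pstar i)
    (ha : ∀ j, j ≠ i → a i j = q i j * pstar j) :
    ∑ j ∈ univ.filter (· ≠ i), (q i j * p j - q j i * p i) =
      fluxVelocity a (p / pstar) i := by
  have hterm : ∀ j ∈ univ.filter (· ≠ i), q i j * p j - q j i * p i =
      a i j * ((p / pstar) j - (p / pstar) i) +
        (q i j * pstar j - q j i * pstar i) * (p i / pstar i) := by
    intro j hj
    rw [ha j (mem_filter.mp hj).2, Pi.div_apply, Pi.div_apply]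
    field_simp [(hpos i).ne', (hpos j).ne']
    ring
  rw [sum_congr rfl hterm, sum_add_distrib, ← sum_mul, sum_sub_distrib, ← sum_mul, hbal,
    sub_self, zero_mul, add_zero, filter_ne', sum_erase _ (by simp)]
  rfl

theorem fluxMatrix_row_sum_eq_col_sum {q : ι → ι → ℝ} {pstar : ι → ℝ}
    (hbal : ∀ i, ∑ j ∈ univ.filter (· ≠ i), q i j * pstar j =
      (∑ j ∈ univ.filter (· ≠ i), q j i) * pstar i) (i : ι) :
    ∑ j, fluxMatrix q pstar i j = ∑ j, fluxMatrix q pstar j i := by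
  rw [← sum_erase univ (f := fluxMatrix q pstar i) (if_pos rfl),
    ← sum_erase univ (f := fun j => fluxMatrix q pstar j i) (if_pos rfl), ← filter_ne',
    sum_congr rfl fun j hj => fluxMatrix_of_ne (mem_filter.mp hj).2.symm,
    sum_congr rfl fun j hj => fluxMatrix_of_ne (mem_filter.mp hj).2, hbal i, sum_mul]

end MasterEquation

/-- Local equivalence of general Markov kinetics and Markov kinetics with
detailed balance: the cones of possible velocities coincide,
`Q^n_B(P,P*) = Q^n_DB(P,P*)`. -/
theorem velCone_balance_eq_detailed_balance (n : ℕ) (pstar p : Fin n → ℝ)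
    (hpos : ∀ i, 0 < pstar i) :
    velConeB n pstar p = velConeDB n pstar p := by
  refine Set.Subset.antisymm ?_
    fun v ⟨q, hq0, hdb, hv⟩ => ⟨q, hq0, balance_of_detailed_balance hdb, hv⟩
  rintro v ⟨q, hq0, hbal, hv⟩
  obtain ⟨b, hb0, hbs, hbv⟩ := fluxVelocity_mem_symmetricVelocityCone
    (fluxMatrix_nonneg hq0 hpos) (fluxMatrix_row_sum_eq_col_sum hbal) (p / pstar)
  set q' : Fin n → Fin n → ℝ := fun i j => b i j / pstar j
  have hq'b : ∀ i j, q' i j * pstar j = b i j := fun i j => div_mul_cancel₀ _ (hpos j).ne'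
  have hdb : ∀ i j, i ≠ j → q' i j * pstar j = q' j i * pstar i := fun i j _ => by
    rw [hq'b, hq'b, hbs]
  refine ⟨q', fun i j _ => div_nonneg (hb0 i j) (hpos j).le, hdb, fun i => ?_⟩
  rw [hv i, sum_filter_ne_eq_fluxVelocity p hpos (hbal i) fun j h => fluxMatrix_of_ne h.symm,
    ← hbv, sum_filter_ne_eq_fluxVelocity p hpos (balance_of_detailed_balance hdb i)
      fun j _ => (hq'b i j).symm]
end

section
/- Let H : ℝ^n_{>0} → ℝ be differentiable and P* strictly positive. If the directional derivative of H at every point P in direction v is ≤ 0 for every velocity v realizable at P by a Markov system with detailed balance and equilibrium P*, then the same holds for every velocity realizable at P by a general Markov system with equilibrium P* (i.e. Lyapunov functions for all detailed-balance systems with equilibrium P* are Lyapunov functions for all Markov systems with equilibrium P*). -/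
/-!
Put `x = P / P*` and `w i j = q i j * P* j`. Balance says that `w` has equal row and column sums,
and the velocity becomes `v i = ∑ j, w i j * (x j - x i)`. Testing the detailed-balance hypothesis
on the system that only exchanges two states `a`, `b` shows that the gradient `f` of `H` at `P` is
monotone along `x`: `x a < x b → f a ≤ f b`. Since `v` is linear in `x`, lowering the top value
of `x` to the next one reduces the claim `∑ i, f i * v i ≤ 0` to `x` with fewer values and to `x`
the indicator of an upper level set `S`. The latter holds because the flux of `w` into `S` equals
the flux out of `S` while `f` is smaller off `S` than on it.
-/

open Finset Matrix

section RateGenerator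

variable {ι : Type*} [Fintype ι]

def rateGenerator (w : ι → ι → ℝ) (x : ι → ℝ) (i : ι) : ℝ :=
  ∑ j, w i j * (x j - x i)

theorem rateGenerator_add (w : ι → ι → ℝ) (x y : ι → ℝ) :
    rateGenerator w (x + y) = rateGenerator w x + rateGenerator w y := by
  funext i
  simp only [rateGenerator, Pi.add_apply, ← sum_add_distrib]
  exact sum_congr rfl fun j _ => by ring

theorem rateGenerator_add_left (w w' : ι → ι → ℝ) (x : ι → ℝ) :
    rateGenerator (w + w') x = rateGenerator w x + rateGenerator w' x := by
  funext i
  simp only [rateGenerator, Pi.add_apply, add_mul, sum_add_distrib]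

theorem const_dotProduct_rateGenerator {w : ι → ι → ℝ} (hbal : ∀ i, ∑ j, w i j = ∑ j, w j i)
    (m : ℝ) (x : ι → ℝ) : (fun _ => m) ⬝ᵥ rateGenerator w x = 0 := by
  have hswap : ∑ i, ∑ j, w i j * x j = ∑ i, ∑ j, w i j * x i := by
    rw [sum_comm]
    refine sum_congr rfl fun j _ => ?_
    rw [← sum_mul, ← sum_mul, hbal j]
  simp only [dotProduct, rateGenerator, mul_sub, sum_sub_distrib, ← mul_sum, hswap, sub_self]

theorem dotProduct_rateGenerator_ite_nonpos {w : ι → ι → ℝ} (hw : ∀ i j, i ≠ j → 0 ≤ w i j)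
    (hbal : ∀ i, ∑ j, w i j = ∑ j, w j i) {f : ι → ℝ} (S : ι → Prop) [DecidablePred S]
    (hf : ∀ i k, ¬ S i → S k → f i ≤ f k) {c : ℝ} (hc : 0 ≤ c) :
    f ⬝ᵥ rateGenerator w (fun i => if S i then c else 0) ≤ 0 := by
  set d : ι → ℝ := fun i => if S i then c else 0
  by_cases hS : ∃ k, S k
  swap
  · have hd : d = 0 := funext fun i => if_neg fun hi => hS ⟨i, hi⟩
    simp [hd, rateGenerator, dotProduct]
  obtain ⟨k, hk⟩ := hS
  obtain ⟨k₀, hk₀, hmin⟩ := exists_min_image (univ.filter S) f ⟨k, by simpa using hk⟩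
  set m := f k₀
  have hd_le : ∀ j, d j ≤ c := fun j => by simp only [d]; split_ifs <;> linarith
  have hd_nonneg : ∀ j, 0 ≤ d j := fun j => by simp only [d]; split_ifs <;> linarith
  have hterm : ∀ i j, (f i - m) * (d j - d i) ≤ 0 := fun i j => by
    by_cases hi : S i
    · rw [show d i = c from if_pos hi]
      exact mul_nonpos_of_nonneg_of_nonpos (sub_nonneg.2 (hmin i (by simpa using hi)))
        (sub_nonpos.2 (hd_le j))
    · rw [show d i = 0 from if_neg hi, sub_zero]
      exact mul_nonpos_of_nonpos_of_nonneg (sub_nonpos.2 (hf i k₀ hi (by simpa using hk₀)))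
        (hd_nonneg j)
  -- by balance, shifting `f` by its minimum on `S` changes nothing and gives every term a sign
  have hshift : f ⬝ᵥ rateGenerator w d = (f - fun _ => m) ⬝ᵥ rateGenerator w d := by
    rw [sub_dotProduct, const_dotProduct_rateGenerator hbal, sub_zero]
  rw [hshift]
  refine sum_nonpos fun i _ => ?_
  rw [Pi.sub_apply, rateGenerator, mul_sum]
  refine sum_nonpos fun j _ => ?_
  rcases eq_or_ne i j with rfl | hij
  · simp
  · rw [mul_left_comm]
    exact mul_nonpos_of_nonneg_of_nonpos (hw i j hij) (hterm i j)

theorem min_add_ite_sub_eq {s a t : ℝ} (ht : t ≤ s ∨ t = a) :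
    min t s + (if s < t then a - s else 0) = t := by
  split_ifs with h
  · rw [min_eq_right h.le, ht.resolve_left h.not_ge]
    ring
  · rw [min_eq_left (not_lt.1 h), add_zero]

theorem dotProduct_rateGenerator_nonpos {w : ι → ι → ℝ} (hw : ∀ i j, i ≠ j → 0 ≤ w i j)
    (hbal : ∀ i, ∑ j, w i j = ∑ j, w j i) {f x : ι → ℝ} (hf : ∀ i j, x i < x j → f i ≤ f j) :
    f ⬝ᵥ rateGenerator w x ≤ 0 := by
  classical
  suffices key : ∀ (V : Finset ℝ) (y : ι → ℝ), (∀ i, y i ∈ V) →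
      (∀ i j, y i < y j → f i ≤ f j) → f ⬝ᵥ rateGenerator w y ≤ 0 from
    key (univ.image x) x (fun i => mem_image_of_mem x (mem_univ i)) hf
  intro V
  induction V using Finset.induction_on_max with
  | empty =>
    intro y hy _
    have : IsEmpty ι := ⟨fun i => by simpa using hy i⟩
    simp [dotProduct]
  | insert a V hlt ih =>
    intro y hy hfy
    rcases V.eq_empty_or_nonempty with rfl | hV
    · have hconst : ∀ i, y i = a := fun i => by simpa using hy i
      simp [dotProduct, rateGenerator, hconst]
    set s := V.max' hV
    have hsa : s < a := hlt s (V.max'_mem hV)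
    have hys : ∀ i, y i ∈ V ∨ y i = a := fun i => by simpa [or_comm] using hy i
    set y' : ι → ℝ := fun i => min (y i) s
    set d : ι → ℝ := fun i => if s < y i then a - s else 0
    have hsplit : y = y' + d :=
      funext fun i => (min_add_ite_sub_eq ((hys i).imp_left (V.le_max' _))).symm
    have hy'V : ∀ i, y' i ∈ V := fun i => by
      rcases hys i with hi | hi
      · rwa [show y' i = y i from min_eq_left (V.le_max' _ hi)]
      · rw [show y' i = s from min_eq_right (hi ▸ hsa.le)]
        exact V.max'_mem hV
    have hfy' : ∀ i j, y' i < y' j → f i ≤ f j := fun i j h =>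
      hfy i j (lt_of_not_ge fun hji => h.not_ge (min_le_min_right s hji))
    calc f ⬝ᵥ rateGenerator w y
        = f ⬝ᵥ rateGenerator w y' + f ⬝ᵥ rateGenerator w d := by
          rw [← dotProduct_add, ← rateGenerator_add, ← hsplit]
      _ ≤ 0 := add_nonpos (ih y' hy'V hfy') <|
          dotProduct_rateGenerator_ite_nonpos hw hbal _
            (fun i k hi hk => hfy i k ((not_lt.1 hi).trans_lt hk)) (sub_nonneg.2 hsa.le)

theorem dotProduct_rateGenerator_single [DecidableEq ι] (f x : ι → ℝ) (a b : ι) (c : ℝ) :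
    f ⬝ᵥ rateGenerator (fun i j => if i = a ∧ j = b then c else 0) x = f a * c * (x b - x a) := by
  simp [dotProduct, rateGenerator, ite_and, mul_assoc]

theorem le_of_forall_symm_dotProduct_rateGenerator_nonpos [DecidableEq ι] {f x : ι → ℝ}
    (h : ∀ w : ι → ι → ℝ, (∀ i j, 0 ≤ w i j) → (∀ i j, w i j = w j i) →
      f ⬝ᵥ rateGenerator w x ≤ 0)
    {a b : ι} (hab : x a < x b) : f a ≤ f b := by
  have hpair := h ((fun i j => if i = a ∧ j = b then 1 else 0) +
      fun i j => if i = b ∧ j = a then 1 else 0)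
    (fun i j => by simp only [Pi.add_apply]; positivity)
    (fun i j => by simp only [Pi.add_apply, and_comm, add_comm])
  rw [rateGenerator_add_left, dotProduct_add, dotProduct_rateGenerator_single,
    dotProduct_rateGenerator_single] at hpair
  nlinarith

end RateGenerator

section MarkovVelocity

variable {ι : Type*} [Fintype ι] [DecidableEq ι]

def markovVelocity (q : ι → ι → ℝ) (p : ι → ℝ) (i : ι) : ℝ :=
  ∑ j ∈ univ.filter (· ≠ i), (q i j * p j - q j i * p i)

theorem markovVelocity_apply_eq_sum_univ (q : ι → ι → ℝ) (p : ι → ℝ) (i : ι) :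
    markovVelocity q p i = ∑ j, (q i j * p j - q j i * p i) := by
  refine sum_filter_of_ne fun j _ h => ?_
  rintro rfl
  exact h (sub_self _)

theorem markovVelocity_eq_zero_iff {q : ι → ι → ℝ} {p : ι → ℝ} :
    markovVelocity q p = 0 ↔ ∀ i, ∑ j, q i j * p j = ∑ j, q j i * p i := by
  simp only [funext_iff, markovVelocity_apply_eq_sum_univ, sum_sub_distrib, Pi.zero_apply,
    sub_eq_zero]

theorem markovVelocity_eq_rateGenerator {q : ι → ι → ℝ} {pstar : ι → ℝ}
    (hpstar : ∀ i, pstar i ≠ 0) (heq : markovVelocity q pstar = 0) (p : ι → ℝ) :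
    markovVelocity q p = rateGenerator (fun i j => q i j * pstar j) (p / pstar) := by
  funext i
  have hzero : (p i / pstar i) * markovVelocity q pstar i = 0 := by rw [heq]; simp
  rw [← sub_eq_zero, ← hzero, markovVelocity_apply_eq_sum_univ,
    markovVelocity_apply_eq_sum_univ, rateGenerator, mul_sum, ← sum_sub_distrib]
  refine sum_congr rfl fun j _ => ?_
  simp only [Pi.div_apply]
  field_simp [hpstar i, hpstar j]
  ring

theorem markovVelocity_div_eq_rateGenerator {w : ι → ι → ℝ} {pstar : ι → ℝ}
    (hpstar : ∀ i, pstar i ≠ 0) (hsymm : ∀ i j, w i j = w j i) (p : ι → ℝ) :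
    markovVelocity (fun i j => w i j / pstar j) p = rateGenerator w (p / pstar) := by
  have hw : (fun i j => w i j / pstar j * pstar j) = w := by
    funext i j
    exact div_mul_cancel₀ _ (hpstar j)
  have hdb : markovVelocity (fun i j => w i j / pstar j) pstar = 0 :=
    markovVelocity_eq_zero_iff.2 fun i => by
      simp only [div_mul_cancel₀ _ (hpstar _), hsymm i]
  rw [markovVelocity_eq_rateGenerator hpstar hdb, hw]

end MarkovVelocity

theorem lyapunov_detailed_balance_implies_general_general (n : ℕ)
    (H : (Fin n → ℝ) → ℝ) (pstar : Fin n → ℝ) (hpos : ∀ i, 0 < pstar i)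
    (hDB : ∀ p : Fin n → ℝ, (∀ i, 0 < p i) →
      ∀ q : Fin n → Fin n → ℝ, (∀ i j, i ≠ j → 0 ≤ q i j) →
      (∀ i j, i ≠ j → q i j * pstar j = q j i * pstar i) →
      fderiv ℝ H p (fun i =>
        ∑ j ∈ Finset.univ.filter (· ≠ i), (q i j * p j - q j i * p i)) ≤ 0) :
    ∀ p : Fin n → ℝ, (∀ i, 0 < p i) →
      ∀ q : Fin n → Fin n → ℝ, (∀ i j, i ≠ j → 0 ≤ q i j) →
      (∀ i, ∑ j ∈ Finset.univ.filter (· ≠ i), q i j * pstar j =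
        (∑ j ∈ Finset.univ.filter (· ≠ i), q j i) * pstar i) →
      fderiv ℝ H p (fun i =>
        ∑ j ∈ Finset.univ.filter (· ≠ i), (q i j * p j - q j i * p i)) ≤ 0 := by
  intro p hp q hq hbal
  have hpstar : ∀ i, pstar i ≠ 0 := fun i => (hpos i).ne'
  set f : Fin n → ℝ := fun i => fderiv ℝ H p fun j => if i = j then 1 else 0
  have hL : ∀ v, fderiv ℝ H p v = f ⬝ᵥ v := fun v =>
    ((fderiv ℝ H p : (Fin n → ℝ) →ₗ[ℝ] ℝ).pi_apply_eq_sum_univ v).trans (dotProduct_comm _ _)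
  have hmono : ∀ a b, (p / pstar) a < (p / pstar) b → f a ≤ f b := fun a b =>
    le_of_forall_symm_dotProduct_rateGenerator_nonpos fun w hw hsymm => by
      have h : fderiv ℝ H p (markovVelocity (fun i j => w i j / pstar j) p) ≤ 0 :=
        hDB p hp _ (fun i j _ => div_nonneg (hw i j) (hpos j).le)
          (fun i j _ => by simp only [div_mul_cancel₀ _ (hpstar _), hsymm i j])
      rwa [markovVelocity_div_eq_rateGenerator hpstar hsymm, hL] at h
  have heq : markovVelocity q pstar = 0 := funext fun i => by
    rw [markovVelocity, sum_sub_distrib, ← sum_mul, hbal i, sub_self, Pi.zero_apply]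
  change fderiv ℝ H p (markovVelocity q p) ≤ 0
  rw [markovVelocity_eq_rateGenerator hpstar heq, hL]
  exact dotProduct_rateGenerator_nonpos (fun i j hij => mul_nonneg (hq i j hij) (hpos j).le)
    (markovVelocity_eq_zero_iff.1 heq) hmono

/-- If `H` is a Lyapunov function for every Markov system with detailed
balance and equilibrium `P*` (directional derivative ≤ 0 along every
realizable velocity at every positive point), then `H` is a Lyapunov function
for every general Markov system with equilibrium `P*`. -/
theorem lyapunov_detailed_balance_implies_general (n : ℕ)
    (H : (Fin n → ℝ) → ℝ) (pstar : Fin n → ℝ) (hpos : ∀ i, 0 < pstar i)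
    (hdiff : ∀ p : Fin n → ℝ, (∀ i, 0 < p i) → DifferentiableAt ℝ H p)
    (hDB : ∀ p : Fin n → ℝ, (∀ i, 0 < p i) →
      ∀ q : Fin n → Fin n → ℝ, (∀ i j, i ≠ j → 0 ≤ q i j) →
      (∀ i j, i ≠ j → q i j * pstar j = q j i * pstar i) →
      fderiv ℝ H p (fun i =>
        ∑ j ∈ Finset.univ.filter (· ≠ i), (q i j * p j - q j i * p i)) ≤ 0) :
    ∀ p : Fin n → ℝ, (∀ i, 0 < p i) →
      ∀ q : Fin n → Fin n → ℝ, (∀ i j, i ≠ j → 0 ≤ q i j) →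
      (∀ i, ∑ j ∈ Finset.univ.filter (· ≠ i), q i j * pstar j =
        (∑ j ∈ Finset.univ.filter (· ≠ i), q j i) * pstar i) →
      fderiv ℝ H p (fun i =>
        ∑ j ∈ Finset.univ.filter (· ≠ i), (q i j * p j - q j i * p i)) ≤ 0 :=
  lyapunov_detailed_balance_implies_general_general n H pstar hpos hDB
end

section
/- Let h : ℝ_{>0} → ℝ be convex and differentiable, P* a positive equilibrium of a general Markov system with nonnegative rates q_{ij} satisfying the balance condition, and P positive. Then ∑_{i≠j} q_{ij} p*_j [ h(p_i/p*_i) − h(p_j/p*_j) + h'(p_i/p*_i)(p_j/p*_j − p_i/p*_i) ] ≤ 0. (This is the time derivative of the Csiszár–Morimoto divergence H_h(P‖P*) = ∑_i p*_i h(p_i/p*_i) along the master equation.) -/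
open Finset

lemma tangent_le_aux {h h' : ℝ → ℝ} (hconv : ConvexOn ℝ (Set.Ioi 0) h)
    (hderiv : ∀ x : ℝ, 0 < x → HasDerivAt h (h' x) x)
    {x y : ℝ} (hx : 0 < x) (hy : 0 < y) :
    h x - h y + h' x * (y - x) ≤ 0 := by
  rcases lt_trichotomy x y with hxy | rfl | hxy
  · have := hconv.le_slope_of_hasDerivAt (Set.mem_Ioi.2 hx) (Set.mem_Ioi.2 hy) hxy (hderiv x hx)
    rw [slope_def_field] at this
    have hyx : 0 < y - x := by linarith
    have := (le_div_iff₀ hyx).1 this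
    linarith
  · simp
  · have := hconv.slope_le_of_hasDerivAt (Set.mem_Ioi.2 hy) (Set.mem_Ioi.2 hx) hxy (hderiv x hx)
    rw [slope_def_field] at this
    have hyx : 0 < x - y := by linarith
    have := (div_le_iff₀ hyx).1 this
    linarith

/-- Morimoto's `H`-theorem for general Markov processes: the time derivative of
the Csiszár–Morimoto divergence `H_h(P‖P*) = ∑ p*_i h(p_i/p*_i)` along the
master equation is nonpositive. -/
theorem morimoto_H_theorem (n : ℕ) (q : Fin n → Fin n → ℝ)
    (pstar p : Fin n → ℝ) (hpstar : ∀ i, 0 < pstar i) (hp : ∀ i, 0 < p i)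
    (hq : ∀ i j, i ≠ j → 0 ≤ q i j)
    (hbal : ∀ i, ∑ j ∈ Finset.univ.filter (· ≠ i), q i j * pstar j =
      (∑ j ∈ Finset.univ.filter (· ≠ i), q j i) * pstar i)
    (h h' : ℝ → ℝ) (hconv : ConvexOn ℝ (Set.Ioi 0) h)
    (hderiv : ∀ x : ℝ, 0 < x → HasDerivAt h (h' x) x) :
    ∑ i, ∑ j ∈ Finset.univ.filter (· ≠ i),
      q i j * pstar j *
        (h (p i / pstar i) - h (p j / pstar j) +
          h' (p i / pstar i) * (p j / pstar j - p i / pstar i)) ≤ 0 := by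
  apply Finset.sum_nonpos
  intro i _
  apply Finset.sum_nonpos
  intro j hj
  have hji : j ≠ i := (Finset.mem_filter.1 hj).2
  have hq' : 0 ≤ q i j * pstar j :=
    mul_nonneg (hq i j hji.symm) (hpstar j).le
  exact mul_nonpos_of_nonneg_of_nonpos hq'
    (tangent_le_aux hconv hderiv (div_pos (hp i) (hpstar i)) (div_pos (hp j) (hpstar j)))
end

section
/- Let h : ℝ_{>0} → ℝ be convex and differentiable and let (q_{ij}) satisfy detailed balance q_{ij}p*_j = q_{ji}p*_i with positive P*. Then for any positive P, the derivative of H_h(P‖P*) = ∑_i p*_i h(p_i/p*_i) along the master equation equals −∑_{i>j} q_{ij} p*_j (p_j/p*_j − p_i/p*_i)(h'(p_j/p*_j) − h'(p_i/p*_i)) and is ≤ 0. -/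
open Finset

lemma h'_mono_aux {h h' : ℝ → ℝ} (hconv : ConvexOn ℝ (Set.Ioi 0) h)
    (hderiv : ∀ x : ℝ, 0 < x → HasDerivAt h (h' x) x) :
    ∀ x y : ℝ, 0 < x → 0 < y → 0 ≤ (x - y) * (h' x - h' y) := by
  have hmono : MonotoneOn (deriv h) (Set.Ioi 0) :=
    hconv.monotoneOn_deriv (fun x hx => (hderiv x hx).differentiableAt)
  have heq : ∀ x : ℝ, 0 < x → h' x = deriv h x := fun x hx => ((hderiv x hx).deriv).symm
  intro x y hx hy
  rcases le_total x y with hxy | hxy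
  · have := hmono hx hy hxy
    rw [← heq x hx, ← heq y hy] at this
    nlinarith
  · have := hmono hy hx hxy
    rw [← heq x hx, ← heq y hy] at this
    nlinarith

/-- `H`-theorem for Markov processes with detailed balance: the derivative of
`H_h(P‖P*) = ∑ p*_i h(p_i/p*_i)` along the master equation equals
`−∑_{i>j} q_{ij} p*_j (p_j/p*_j − p_i/p*_i)(h'(p_j/p*_j) − h'(p_i/p*_i))`
and is nonpositive. -/
theorem H_theorem_detailed_balance (n : ℕ) (q : Fin n → Fin n → ℝ)
    (pstar p : Fin n → ℝ) (hpstar : ∀ i, 0 < pstar i) (hp : ∀ i, 0 < p i)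
    (hq : ∀ i j, i ≠ j → 0 ≤ q i j)
    (hdb : ∀ i j, i ≠ j → q i j * pstar j = q j i * pstar i)
    (h h' : ℝ → ℝ) (hconv : ConvexOn ℝ (Set.Ioi 0) h)
    (hderiv : ∀ x : ℝ, 0 < x → HasDerivAt h (h' x) x) :
    (∑ i, h' (p i / pstar i) *
        (∑ j ∈ Finset.univ.filter (· ≠ i), (q i j * p j - q j i * p i)) =
      -∑ i, ∑ j ∈ Finset.univ.filter (· < i),
        q i j * pstar j * (p j / pstar j - p i / pstar i) *
          (h' (p j / pstar j) - h' (p i / pstar i))) ∧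
    (∑ i, h' (p i / pstar i) *
        (∑ j ∈ Finset.univ.filter (· ≠ i), (q i j * p j - q j i * p i)) ≤ 0) := by
  set u : Fin n → ℝ := fun i => p i / pstar i with hu
  set f : Fin n → Fin n → ℝ := fun i j => h' (u i) * (q i j * p j - q j i * p i) with hf
  have hdiag : ∀ i, f i i = 0 := by intro i; simp [hf]
  -- step 1: LHS = ∑ i ∑ j, f i j
  have step1 : ∑ i, h' (p i / pstar i) *
      (∑ j ∈ Finset.univ.filter (· ≠ i), (q i j * p j - q j i * p i)) = ∑ i, ∑ j, f i j := by
    refine Finset.sum_congr rfl fun i _ => ?_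
    rw [Finset.mul_sum]
    rw [show (∑ j, f i j) = ∑ j ∈ univ.filter (· ≠ i), f i j + ∑ j ∈ univ.filter (¬ · ≠ i), f i j
      from (Finset.sum_filter_add_sum_filter_not _ _ _).symm]
    have : ∑ j ∈ univ.filter (¬ · ≠ i), f i j = 0 := by
      apply Finset.sum_eq_zero
      intro j hj
      simp only [Finset.mem_filter] at hj
      have : j = i := by simpa using hj.2
      rw [this]; exact hdiag i
    rw [this, add_zero]
  -- step 2: double sum = sum over pairs j < i of f i j + f j i
  have step2 : ∑ i, ∑ j, f i j =
      ∑ i, ∑ j ∈ Finset.univ.filter (· < i), (f i j + f j i) := by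
    have expand : ∀ i : Fin n, ∑ j, f i j =
        ∑ j ∈ univ.filter (· < i), f i j + ∑ j ∈ univ.filter (fun j => i < j), f i j := by
      intro i
      rw [show (∑ j, f i j) = ∑ j ∈ univ.filter (· < i), f i j
          + ∑ j ∈ univ.filter (¬ · < i), f i j
        from (Finset.sum_filter_add_sum_filter_not _ _ _).symm]
      congr 1
      refine (Finset.sum_subset ?_ ?_).symm
      · intro j hj
        simp only [Finset.mem_filter, Finset.mem_univ, true_and] at hj ⊢
        exact not_lt.mpr hj.le
      · intro j hj hnot
        simp only [Finset.mem_filter, Finset.mem_univ, true_and, not_lt] at hj hnot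
        have : j = i := le_antisymm hnot hj
        rw [this]; exact hdiag i
    calc ∑ i, ∑ j, f i j
        = ∑ i, (∑ j ∈ univ.filter (· < i), f i j + ∑ j ∈ univ.filter (fun j => i < j), f i j) :=
          Finset.sum_congr rfl fun i _ => expand i
      _ = ∑ i, ∑ j ∈ univ.filter (· < i), f i j
          + ∑ i, ∑ j ∈ univ.filter (fun j => i < j), f i j := Finset.sum_add_distrib
      _ = ∑ i, ∑ j ∈ univ.filter (· < i), f i j
          + ∑ j, ∑ i ∈ univ.filter (fun i => i < j), f i j := by
            congr 1
            simp only [Finset.sum_filter]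
            exact Finset.sum_comm
      _ = ∑ i, ∑ j ∈ univ.filter (· < i), (f i j + f j i) := by
            rw [← Finset.sum_add_distrib]
            refine Finset.sum_congr rfl fun i _ => ?_
            rw [← Finset.sum_add_distrib]
  -- step 3: pairwise identity
  have pair : ∀ i j : Fin n, j < i →
      f i j + f j i = -(q i j * pstar j * (u j - u i) * (h' (u j) - h' (u i))) := by
    intro i j hij
    have hne : i ≠ j := (ne_of_lt hij).symm
    have hdb' := hdb i j hne
    have hpi : pstar i * u i = p i := by
      simp only [hu]; rw [mul_comm, div_mul_eq_mul_div, mul_div_assoc, div_self (hpstar _).ne', mul_one]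
    have hpj : pstar j * u j = p j := by
      simp only [hu]; rw [mul_comm, div_mul_eq_mul_div, mul_div_assoc, div_self (hpstar _).ne', mul_one]
    have e1 : q j i * p i = q i j * pstar j * u i := by rw [← hpi, ← mul_assoc, ← hdb']
    have e2 : q i j * p j = q i j * pstar j * u j := by rw [← hpj, ← mul_assoc]
    have e3 : q i j * p j - q j i * p i = q i j * pstar j * (u j - u i) := by
      rw [e1, e2]; ring
    have e4 : q j i * p i - q i j * p j = -(q i j * pstar j * (u j - u i)) := by
      rw [e1, e2]; ring
    simp only [hf, e3, e4]
    ring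
  -- nonnegativity of each pair term
  have pairnn : ∀ i j : Fin n, j < i →
      0 ≤ q i j * pstar j * (u j - u i) * (h' (u j) - h' (u i)) := by
    intro i j hij
    have hne : i ≠ j := (ne_of_lt hij).symm
    have h1 : 0 ≤ q i j * pstar j := mul_nonneg (hq i j hne) (hpstar j).le
    have h2 : 0 ≤ (u j - u i) * (h' (u j) - h' (u i)) :=
      h'_mono_aux hconv hderiv (u j) (u i) (div_pos (hp j) (hpstar j))
        (div_pos (hp i) (hpstar i))
    calc (0:ℝ) ≤ (q i j * pstar j) * ((u j - u i) * (h' (u j) - h' (u i))) :=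
          mul_nonneg h1 h2
      _ = q i j * pstar j * (u j - u i) * (h' (u j) - h' (u i)) := by ring
  have main : ∑ i, h' (p i / pstar i) *
      (∑ j ∈ Finset.univ.filter (· ≠ i), (q i j * p j - q j i * p i)) =
      -∑ i, ∑ j ∈ Finset.univ.filter (· < i),
        q i j * pstar j * (p j / pstar j - p i / pstar i) *
          (h' (p j / pstar j) - h' (p i / pstar i)) := by
    rw [step1, step2, ← Finset.sum_neg_distrib]
    refine Finset.sum_congr rfl fun i _ => ?_
    rw [← Finset.sum_neg_distrib]
    refine Finset.sum_congr rfl fun j hj => ?_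
    simp only [Finset.mem_filter] at hj
    exact pair i j hj.2
  refine ⟨main, ?_⟩
  rw [main, neg_nonpos]
  exact Finset.sum_nonneg fun i _ => Finset.sum_nonneg fun j hj =>
    pairnn i j (by simpa using (Finset.mem_filter.mp hj).2)
end

section
/- For n > 2, the dimension of the linear span of the cone of systems with detailed balance with given positive equilibrium P* is n(n−1)/2, which is strictly less than (n−1)², the dimension of the affine solution set of the balance conditions; hence the inclusion Q^n_DB(P*) ⊊ Q^n_B(P*) is strict. -/
/-!
Both cones are cut out of linear subspaces by the orthant `0 ≤ q i j` (`i ≠ j`), and both contain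
the rates `q* i j = 1 / p* j`, which lie in the interior of that orthant; hence each cone spans its
subspace. Detailed balance says that the flux matrix `q i j * p* j` is symmetric, leaving one free
entry per unordered pair `{i, j}`: `n.choose 2` dimensions. The balance subspace is the kernel of
`q ↦ (diagonal of q, balance defects)`, i.e. `n²` entries subject to `2n` conditions; the defects
always sum to zero and this is the only relation, so its dimension is `n² - (2n - 1) = (n - 1)²`.
-/

open Finset

/-- Cone of rate matrices (zero diagonal) satisfying the balance condition
with equilibrium `P*`. -/
def coneB (n : ℕ) (pstar : Fin n → ℝ) : Set (Fin n → Fin n → ℝ) :=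
  {q | (∀ i, q i i = 0) ∧ (∀ i j, i ≠ j → 0 ≤ q i j) ∧
    (∀ i, ∑ j ∈ Finset.univ.filter (· ≠ i), q i j * pstar j =
      (∑ j ∈ Finset.univ.filter (· ≠ i), q j i) * pstar i)}

/-- Cone of rate matrices (zero diagonal) satisfying detailed balance
with equilibrium `P*`. -/
def coneDB (n : ℕ) (pstar : Fin n → ℝ) : Set (Fin n → Fin n → ℝ) :=
  {q | (∀ i, q i i = 0) ∧ (∀ i j, i ≠ j → 0 ≤ q i j) ∧
    (∀ i j, i ≠ j → q i j * pstar j = q j i * pstar i)}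

variable {n : ℕ} {p : Fin n → ℝ}

def balanceMap (n : ℕ) (p : Fin n → ℝ) :
    (Fin n → Fin n → ℝ) →ₗ[ℝ] (Fin n → ℝ) × (Fin n → ℝ) where
  toFun q := (fun i => q i i, fun i => ∑ j, q i j * p j - (∑ j, q j i) * p i)
  map_add' q r := by
    ext i <;> simp only [Pi.add_apply, Prod.fst_add, Prod.snd_add, add_mul, sum_add_distrib]
    ring
  map_smul' c q := by
    ext i <;> simp [mul_sub, mul_sum, sum_mul, mul_assoc]

def balanceSubspace (n : ℕ) (p : Fin n → ℝ) : Submodule ℝ (Fin n → Fin n → ℝ) :=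
  LinearMap.ker (balanceMap n p)

def detailedBalanceMap (n : ℕ) (p : Fin n → ℝ) :
    (Fin n → Fin n → ℝ) →ₗ[ℝ] (Fin n → ℝ) × (Fin n → Fin n → ℝ) where
  toFun q := (fun i => q i i, fun i j => q i j * p j - q j i * p i)
  map_add' q r := by
    ext i <;> simp only [Pi.add_apply, Prod.fst_add, Prod.snd_add, add_mul]
    ring
  map_smul' c q := by
    ext i <;> simp [mul_sub, mul_assoc]

def detailedBalanceSubspace (n : ℕ) (p : Fin n → ℝ) : Submodule ℝ (Fin n → Fin n → ℝ) :=
  LinearMap.ker (detailedBalanceMap n p)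

lemma mem_balanceSubspace {q : Fin n → Fin n → ℝ} :
    q ∈ balanceSubspace n p ↔
      (∀ i, q i i = 0) ∧ ∀ i, ∑ j, q i j * p j = (∑ j, q j i) * p i := by
  simp [balanceSubspace, balanceMap, Prod.ext_iff, funext_iff, sub_eq_zero]

lemma mem_detailedBalanceSubspace {q : Fin n → Fin n → ℝ} :
    q ∈ detailedBalanceSubspace n p ↔
      (∀ i, q i i = 0) ∧ ∀ i j, q i j * p j = q j i * p i := by
  simp [detailedBalanceSubspace, detailedBalanceMap, Prod.ext_iff, funext_iff, sub_eq_zero]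

lemma detailedBalanceSubspace_le_balanceSubspace :
    detailedBalanceSubspace n p ≤ balanceSubspace n p := by
  intro q hq
  obtain ⟨hdiag, hdb⟩ := mem_detailedBalanceSubspace.1 hq
  exact mem_balanceSubspace.2 ⟨hdiag, fun i => by simp only [hdb i, sum_mul]⟩

lemma coneB_eq_inter :
    coneB n p = (balanceSubspace n p : Set (Fin n → Fin n → ℝ)) ∩
      {q | ∀ i j, i ≠ j → 0 ≤ q i j} := by
  have sum_filter_ne {f : Fin n → ℝ} {i : Fin n} (h : f i = 0) :
      ∑ j ∈ univ.filter (· ≠ i), f j = ∑ j, f j := by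
    rw [filter_ne', sum_erase _ h]
  ext q
  simp only [coneB, Set.mem_inter_iff, SetLike.mem_coe, mem_balanceSubspace, Set.mem_ofPred_eq]
  refine ⟨fun ⟨hdiag, hnn, hb⟩ => ⟨⟨hdiag, fun i => ?_⟩, hnn⟩,
    fun ⟨⟨hdiag, hb⟩, hnn⟩ => ⟨hdiag, hnn, fun i => ?_⟩⟩ <;>
  simpa only [sum_filter_ne (f := fun j => q i j * p j) (i := i) (by simp [hdiag]),
    sum_filter_ne (f := fun j => q j i) (i := i) (hdiag i)]
    using hb i

lemma coneDB_eq_inter :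
    coneDB n p = (detailedBalanceSubspace n p : Set (Fin n → Fin n → ℝ)) ∩
      {q | ∀ i j, i ≠ j → 0 ≤ q i j} := by
  ext q
  simp only [coneDB, Set.mem_inter_iff, SetLike.mem_coe, mem_detailedBalanceSubspace,
    Set.mem_ofPred_eq]
  refine ⟨fun ⟨hdiag, hnn, hdb⟩ => ⟨⟨hdiag, fun i j => ?_⟩, hnn⟩,
    fun ⟨⟨hdiag, hdb⟩, hnn⟩ => ⟨hdiag, hnn, fun i j _ => hdb i j⟩⟩
  rcases eq_or_ne i j with rfl | hij
  · rfl
  · exact hdb i j hij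

theorem Submodule.span_inter_nonneg_eq {ι κ : Type*} [Finite ι] [Finite κ]
    (V : Submodule ℝ (ι → κ → ℝ)) (s : ι → κ → Prop) {x : ι → κ → ℝ} (hxV : x ∈ V)
    (hx : ∀ i j, s i j → 0 < x i j) :
    span ℝ ((V : Set (ι → κ → ℝ)) ∩ {q | ∀ i j, s i j → 0 ≤ q i j}) = V := by
  refine le_antisymm (span_le.2 Set.inter_subset_left) fun q hq => ?_
  obtain ⟨c, hc⟩ := (Set.finite_range fun ij : ι × κ => -q ij.1 ij.2 / x ij.1 ij.2).bddAbove
  have hshift : q + c • x ∈ (V : Set (ι → κ → ℝ)) ∩ {q | ∀ i j, s i j → 0 ≤ q i j} := by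
    refine ⟨V.add_mem hq (V.smul_mem c hxV), fun i j hij => ?_⟩
    have := (div_le_iff₀ (hx i j hij)).1 (hc ⟨(i, j), rfl⟩)
    simp only [Pi.add_apply, Pi.smul_apply, smul_eq_mul]
    linarith
  have hx' : x ∈ (V : Set (ι → κ → ℝ)) ∩ {q | ∀ i j, s i j → 0 ≤ q i j} :=
    ⟨hxV, fun i j hij => (hx i j hij).le⟩
  simpa using sub_mem (subset_span hshift) (smul_mem _ c (subset_span hx'))

noncomputable def uniformRates (p : Fin n → ℝ) : Fin n → Fin n → ℝ :=
  fun i j => if i = j then 0 else (p j)⁻¹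

lemma uniformRates_pos (hpos : ∀ i, 0 < p i) {i j : Fin n} (hij : i ≠ j) :
    0 < uniformRates p i j := by
  simpa [uniformRates, hij] using hpos j

lemma uniformRates_mem_detailedBalanceSubspace (hp : ∀ i, p i ≠ 0) :
    uniformRates p ∈ detailedBalanceSubspace n p := by
  refine mem_detailedBalanceSubspace.2 ⟨fun i => if_pos rfl, fun i j => ?_⟩
  rcases eq_or_ne i j with rfl | hij
  · rfl
  · simp [uniformRates, hij, hij.symm, hp]

lemma span_coneDB (hpos : ∀ i, 0 < p i) :
    Submodule.span ℝ (coneDB n p) = detailedBalanceSubspace n p := by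
  rw [coneDB_eq_inter]
  exact Submodule.span_inter_nonneg_eq _ _
    (uniformRates_mem_detailedBalanceSubspace fun i => (hpos i).ne') fun _ _ => uniformRates_pos hpos

lemma span_coneB (hpos : ∀ i, 0 < p i) :
    Submodule.span ℝ (coneB n p) = balanceSubspace n p := by
  rw [coneB_eq_inter]
  exact Submodule.span_inter_nonneg_eq _ _ (detailedBalanceSubspace_le_balanceSubspace
    (uniformRates_mem_detailedBalanceSubspace fun i => (hpos i).ne')) fun _ _ => uniformRates_pos hpos

def detailedBalanceFlux (n : ℕ) (p : Fin n → ℝ) :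
    detailedBalanceSubspace n p →ₗ[ℝ] ({z : Sym2 (Fin n) // ¬z.IsDiag} → ℝ) where
  toFun q z := Sym2.lift
    ⟨fun i j => (q : Fin n → Fin n → ℝ) i j * p j, (mem_detailedBalanceSubspace.1 q.2).2⟩ z
  map_add' q r := by
    ext ⟨z, _⟩
    induction z using Sym2.ind
    simp [add_mul]
  map_smul' c q := by
    ext ⟨z, _⟩
    induction z using Sym2.ind
    simp [mul_assoc]

lemma detailedBalanceFlux_bijective (hp : ∀ i, p i ≠ 0) :
    Function.Bijective (detailedBalanceFlux n p) := by
  constructor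
  · refine (injective_iff_map_eq_zero _).2 fun q hq => ?_
    obtain ⟨hdiag, -⟩ := mem_detailedBalanceSubspace.1 q.2
    ext i j
    rcases eq_or_ne i j with rfl | hij
    · exact hdiag i
    · have := congrFun hq ⟨s(i, j), Sym2.mk_isDiag_iff.not.2 hij⟩
      simpa [detailedBalanceFlux, hp] using this
  · intro f
    let q : Fin n → Fin n → ℝ := fun i j =>
      if hij : i = j then 0 else f ⟨s(i, j), Sym2.mk_isDiag_iff.not.2 hij⟩ / p j
    have hq : q ∈ detailedBalanceSubspace n p := by
      refine mem_detailedBalanceSubspace.2 ⟨fun i => dif_pos rfl, fun i j => ?_⟩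
      rcases eq_or_ne i j with rfl | hij
      · rfl
      · simp [q, hij, hij.symm, hp, Sym2.eq_swap]
    refine ⟨⟨q, hq⟩, ?_⟩
    ext ⟨z, hz⟩
    induction z using Sym2.ind with
    | _ i j =>
      have hij : i ≠ j := Sym2.mk_isDiag_iff.not.1 hz
      simp [detailedBalanceFlux, q, hij, hp]

lemma finrank_detailedBalanceSubspace (hp : ∀ i, p i ≠ 0) :
    Module.finrank ℝ (detailedBalanceSubspace n p) = n.choose 2 := by
  rw [(LinearEquiv.ofBijective _ (detailedBalanceFlux_bijective hp)).finrank_eq,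
    Module.finrank_fintype_fun_eq_card, Sym2.card_subtype_not_diag, Fintype.card_fin]

def sumSnd (n : ℕ) : (Fin n → ℝ) × (Fin n → ℝ) →ₗ[ℝ] ℝ where
  toFun x := ∑ i, x.2 i
  map_add' _ _ := sum_add_distrib
  map_smul' _ _ := (mul_sum ..).symm

@[simp] lemma sumSnd_apply (x : (Fin n → ℝ) × (Fin n → ℝ)) : sumSnd n x = ∑ i, x.2 i := rfl

lemma range_balanceMap (hp : ∀ i, p i ≠ 0) (hn : 0 < n) :
    LinearMap.range (balanceMap n p) = LinearMap.ker (sumSnd n) := by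
  apply le_antisymm
  · rintro _ ⟨q, rfl⟩
    simp only [balanceMap, LinearMap.mem_ker, sumSnd_apply, LinearMap.coe_mk, AddHom.coe_mk,
      sum_sub_distrib, sum_mul]
    rw [sum_comm, sub_self]
  · rintro ⟨d, v⟩ hv
    simp only [LinearMap.mem_ker, sumSnd_apply] at hv
    -- `v i / (n * p j)` has balance defect `v - (∑ v) / n = v`; the diagonal term then fixes
    -- the first component without changing the defect.
    refine ⟨fun i j => v i / (n * p j) + if i = j then d i - v i / (n * p i) else 0, ?_⟩
    ext k
    · simp [balanceMap]
    · simp only [balanceMap, LinearMap.coe_mk, AddHom.coe_mk, add_mul, div_mul_eq_mul_div,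
        ite_mul, zero_mul, sum_add_distrib, sum_ite_eq, sum_ite_eq', mem_univ, ↓reduceIte,
        add_sub_add_right_eq_sub]
      have hterm (j : Fin n) : v k * p j / (n * p j) = v k / n := by
        field_simp [hp j]
      simp only [hterm, ← sum_div, hv, sum_const, card_univ, Fintype.card_fin, nsmul_eq_mul,
        zero_div, zero_mul, sub_zero]
      field_simp

lemma finrank_balanceSubspace (hp : ∀ i, p i ≠ 0) (hn : 0 < n) :
    Module.finrank ℝ (balanceSubspace n p) = (n - 1) ^ 2 := by
  have hσ : sumSnd n ≠ 0 := fun h => by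
    simpa using LinearMap.congr_fun h (0, Pi.single ⟨0, hn⟩ 1)
  have hker := Module.Dual.finrank_ker_add_one_of_ne_zero hσ
  have hrank := (balanceMap n p).finrank_range_add_finrank_ker
  rw [range_balanceMap hp hn] at hrank
  simp only [Module.finrank_prod, Module.finrank_pi, Module.finrank_pi_fintype, sum_const,
    card_univ, Fintype.card_fin, smul_eq_mul] at hker hrank
  obtain ⟨m, rfl⟩ : ∃ m, n = m + 1 := ⟨n - 1, by omega⟩
  rw [Nat.add_sub_cancel, balanceSubspace]
  nlinarith

lemma Nat.mul_pred_div_two_lt_pred_sq (hn : 2 < n) : n * (n - 1) / 2 < (n - 1) ^ 2 := by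
  obtain ⟨m, rfl⟩ : ∃ m, n = m + 3 := ⟨n - 3, by omega⟩
  rw [Nat.div_lt_iff_lt_mul two_pos]
  show (m + 3) * (m + 2) < (m + 2) ^ 2 * 2
  nlinarith

lemma coneDB_subset_coneB : coneDB n p ⊆ coneB n p := by
  rw [coneDB_eq_inter, coneB_eq_inter]
  exact Set.inter_subset_inter_left _ detailedBalanceSubspace_le_balanceSubspace

/-- For `n > 2`, the cone of detailed balance systems spans a space of
dimension `n(n−1)/2`, strictly less than `(n−1)²`, the dimension of the span
of the cone of systems with the balance condition; hence the inclusion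
`Q^n_DB(P*) ⊊ Q^n_B(P*)` is strict. -/
theorem coneDB_dim_lt_coneB_dim (n : ℕ) (hn : 2 < n) (pstar : Fin n → ℝ)
    (hpos : ∀ i, 0 < pstar i) :
    Module.finrank ℝ ↥(Submodule.span ℝ (coneDB n pstar)) = n * (n - 1) / 2 ∧
    Module.finrank ℝ ↥(Submodule.span ℝ (coneB n pstar)) = (n - 1) ^ 2 ∧
    n * (n - 1) / 2 < (n - 1) ^ 2 ∧
    coneDB n pstar ⊂ coneB n pstar := by
  have hp (i : Fin n) : pstar i ≠ 0 := (hpos i).ne'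
  have hdimDB : Module.finrank ℝ (Submodule.span ℝ (coneDB n pstar)) = n * (n - 1) / 2 := by
    rw [span_coneDB hpos, finrank_detailedBalanceSubspace hp, Nat.choose_two_right]
  have hdimB : Module.finrank ℝ (Submodule.span ℝ (coneB n pstar)) = (n - 1) ^ 2 := by
    rw [span_coneB hpos, finrank_balanceSubspace hp (by omega)]
  have hlt := Nat.mul_pred_div_two_lt_pred_sq hn
  refine ⟨hdimDB, hdimB, hlt, ssubset_of_subset_of_ne coneDB_subset_coneB fun h => ?_⟩
  rw [h, hdimB] at hdimDB
  omega
end
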